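/- arXiv:2411.07158 — 6 statements merged into one kernel-verified Lean document; each statement's English description precedes it below -/
import Mathlib

section
/- Let T be a rooted locally finite tree and U an almost upper-directed (AUD) transition matrix on T. Then U is irreducible if and only if both of the following hold: (a) for every node u ≠ ∅ one has U(u, p(u)) > 0, and (b) for every node v ≠ ∅ there exist a strict ancestor u of v (i.e. u ∈ [[∅,v]], u ≠ v) and a node w ∈ T_v such that U(u, w) > 0. -/
open scoped BigOperators ENNReal

/-- Nodes of trees are finite words over `ℕ`; the root is the empty word. -/
abbrev Word : Type := List ℕ

/-- The parent of a node: the word with its last letter removed. -/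
def par (u : Word) : Word := u.dropLast

/-- A rooted locally finite tree: a set of words containing the root, closed
under prefixes, in which every node has finitely many children. -/
def IsTree (T : Set Word) : Prop :=
  ([] : Word) ∈ T ∧
  (∀ u ∈ T, ∀ v : Word, v <+: u → v ∈ T) ∧
  (∀ u ∈ T, {i : ℕ | u ++ [i] ∈ T}.Finite)

/-- `desc T u` is the set of descendants of `u` in `T` (the subtree `T_u`). -/
def desc (T : Set Word) (u : Word) : Set Word := {w | w ∈ T ∧ u <+: w}

/-- The children of `u` in `T`. -/
def children (T : Set Word) (u : Word) : Set Word := {v | v ∈ T ∧ ∃ i : ℕ, v = u ++ [i]}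

/-- A transition matrix on `T`: nonnegative entries, rows summing to 1 over `T`. -/
def IsTransMatrix (T : Set Word) (U : Word → Word → ℝ) : Prop :=
  (∀ u ∈ T, ∀ v ∈ T, 0 ≤ U u v) ∧ ∀ u ∈ T, HasSum (fun v : T => U u (v : Word)) 1

/-- Almost upper-directed: positive transitions go to the parent or to a descendant. -/
def IsAUD (T : Set Word) (U : Word → Word → ℝ) : Prop :=
  ∀ u ∈ T, ∀ v ∈ T, 0 < U u v → v = par u ∨ v ∈ desc T u

/-- Almost lower-directed: positive transitions go to a child or to an ancestor. -/
def IsALD (T : Set Word) (D : Word → Word → ℝ) : Prop :=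
  ∀ u ∈ T, ∀ v ∈ T, 0 < D u v → v ∈ children T u ∨ v <+: u

/-- Random-walk transition matrix: positive transitions go to `u`, its parent or a child. -/
def IsRW (T : Set Word) (M : Word → Word → ℝ) : Prop :=
  ∀ u ∈ T, ∀ v ∈ T, 0 < M u v → v = u ∨ v = par u ∨ v ∈ children T u

/-- Irreducibility: any node can be reached from any other by positive transitions. -/
def IrreducibleOn (T : Set Word) (U : Word → Word → ℝ) : Prop :=
  ∀ u ∈ T, ∀ v ∈ T, ∃ (n : ℕ) (x : ℕ → Word),
    x 0 = u ∧ x n = v ∧ (∀ k ≤ n, x k ∈ T) ∧ ∀ k < n, 0 < U (x k) (x (k + 1))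

/-- The weight of a path (a list of nodes): product of the transitions along it. -/
def wgt (U : Word → Word → ℝ) : List Word → ℝ
  | x :: y :: rest => U x y * wgt U (y :: rest)
  | _ => 1

/-- A first-return loop at the root. -/
def IsLoop (T : Set Word) (γ : List Word) : Prop :=
  2 ≤ γ.length ∧ γ.head? = some ([] : Word) ∧ γ.getLast? = some ([] : Word) ∧
  (∀ x ∈ γ, x ∈ T) ∧
  ∀ k, 0 < k → k < γ.length - 1 → γ.getD k [] ≠ ([] : Word)

/-- The total weight of first-return loops at the root. -/
noncomputable def loopSum (T : Set Word) (U : Word → Word → ℝ) : ℝ :=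
  ∑' γ : {γ : List Word // IsLoop T γ}, wgt U γ.1

/-- Recurrence: the total weight of first-return loops at the root is 1. -/
def Recurrent (T : Set Word) (U : Word → Word → ℝ) : Prop := loopSum T U = 1

/-- Expected return time to the root. -/
noncomputable def returnTime (T : Set Word) (U : Word → Word → ℝ) : ℝ≥0∞ :=
  ∑' γ : {γ : List Word // IsLoop T γ},
    ((γ.1.length - 1 : ℕ) : ℝ≥0∞) * ENNReal.ofReal (wgt U γ.1)

/-- Positive recurrence: recurrent with finite expected return time. -/
def PosRecurrent (T : Set Word) (U : Word → Word → ℝ) : Prop :=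
  Recurrent T U ∧ returnTime T U < ⊤

/-- `descWeight T U a b = U(a, T_b)`, the total weight from `a` into the subtree `T_b`. -/
noncomputable def descWeight (T : Set Word) (U : Word → Word → ℝ) (a b : Word) : ℝ :=
  ∑' w : desc T b, U a (w : Word)

/-- The matrix `(Id - ᵘU)^{(u)}`: rows/columns indexed by the strict prefixes of `u`
(the prefix of length `i` corresponds to the index `i`), the column of `u` removed. -/
noncomputable def hMat (T : Set Word) (U : Word → Word → ℝ) (u : Word) :
    Matrix (Fin u.length) (Fin u.length) ℝ :=
  Matrix.of fun i j =>
    (if i = j then 1 else 0) -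
      (if (i : ℕ) ≤ (j : ℕ) + 1 then
        descWeight T U (u.take i) (u.take j) - descWeight T U (u.take i) (u.take ((j : ℕ) + 1))
       else 0)

/-- The h-invariant measure `π` of an AUD transition matrix, with `π(∅) = 1`:
`π(u) = det((Id - ᵘU)^{(u)}) / ∏_{∅ ≠ v ⪯ u} U(v, p(v))`. -/
noncomputable def hInv (T : Set Word) (U : Word → Word → ℝ) (u : Word) : ℝ :=
  (hMat T U u).det / ∏ k ∈ Finset.range u.length, U (u.take (k + 1)) (u.take k)

/-- Paths from `i` to the root whose interior stays away from the root and below height `b`. -/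
def IsEscape (T : Set Word) (i : Word) (b : ℕ) (γ : List Word) : Prop :=
  2 ≤ γ.length ∧ γ.head? = some i ∧ γ.getLast? = some ([] : Word) ∧
  (∀ x ∈ γ, x ∈ T) ∧
  ∀ k, 0 < k → k < γ.length - 1 → γ.getD k [] ≠ ([] : Word) ∧ (γ.getD k []).length < b

/-- `qval T U i b`: total weight of paths from `i` to the root staying away from the
root and below height `b` in their interior. -/
noncomputable def qval (T : Set Word) (U : Word → Word → ℝ) (i : Word) (b : ℕ) : ℝ :=
  ∑' γ : {γ : List Word // IsEscape T i b γ}, wgt U γ.1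

/-- An end of a tree: an infinite injective path starting at the root. -/
def IsEnd (T : Set Word) (p : ℕ → Word) : Prop :=
  p 0 = [] ∧ ∀ k, p (k + 1) ∈ children T (p k)

/-- `T^𝕡`: the nodes of the end `𝕡` together with the finite subtrees hanging from
its neighbors. -/
def endTree (T : Set Word) (p : ℕ → Word) : Set Word :=
  Set.range p ∪
    {v | v ∈ T ∧ ∃ w ∈ T, w <+: v ∧ w ∉ Set.range p ∧ par w ∈ Set.range p ∧ (desc T w).Finite}

/-- `projTo T p w v`: the projection `℘_𝕡` sends `w` to `v` (fixing `T^𝕡`, and sending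
any other node to its highest ancestor on `𝕡`). -/
def projTo (T : Set Word) (p : ℕ → Word) (w v : Word) : Prop :=
  (w ∈ endTree T p ∧ v = w) ∨
  (w ∉ endTree T p ∧ v ∈ Set.range p ∧ v <+: w ∧
    ∀ v' ∈ Set.range p, v' <+: w → v' <+: v)

/-- The projected transition matrix `U^𝕡` on `T^𝕡`. -/
noncomputable def projMat (T : Set Word) (p : ℕ → Word) (U : Word → Word → ℝ)
    (u v : Word) : ℝ :=
  ∑' w : {w : Word // w ∈ T ∧ projTo T p w v}, U u (w : Word)

/-- Longest common prefix of two words. -/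
def lcp : Word → Word → Word
  | a :: as, b :: bs => if a = b then a :: lcp as bs else []
  | _, _ => []

/-- Graph distance on the tree. -/
def treeDist (u v : Word) : ℕ :=
  (u.length - (lcp u v).length) + (v.length - (lcp u v).length)

/-- A first-return path from `w` to the set `B`. -/
def IsReturnPath (T : Set Word) (B : Set Word) (w : Word) (γ : List Word) : Prop :=
  2 ≤ γ.length ∧ γ.head? = some w ∧ (∀ x ∈ γ, x ∈ T) ∧
  (∀ k, 0 < k → k < γ.length - 1 → γ.getD k [] ∉ B) ∧
  ∃ z ∈ B, γ.getLast? = some z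

open Classical in
/-- `expReturn T U B w`: the expected first-return time from `w` to `B`, set to `∞`
when return to `B` is not almost sure. -/
noncomputable def expReturn (T : Set Word) (U : Word → Word → ℝ) (B : Set Word)
    (w : Word) : ℝ≥0∞ :=
  if (∑' γ : {γ : List Word // IsReturnPath T B w γ}, wgt U γ.1) = 1 then
    ∑' γ : {γ : List Word // IsReturnPath T B w γ},
      ((γ.1.length - 1 : ℕ) : ℝ≥0∞) * ENNReal.ofReal (wgt U γ.1)
  else ⊤

/-- `P(T)`: nodes with infinitely many descendants (union of the ends of `T`). -/
def Ptree (T : Set Word) : Set Word := {u | u ∈ T ∧ (desc T u).Infinite}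

/-- `Q(T) = 1 + ∑_{u ∈ P(T)} (|c_{P(T)}(u)| - 1)`, valued in `ℝ≥0∞`. -/
noncomputable def Qval (T : Set Word) : ℝ≥0∞ :=
  1 + ∑' u : Ptree T, (((children (Ptree T) (u : Word)).ncard - 1 : ℕ) : ℝ≥0∞)

/-- Complex version of `hMat`, with `λ` on the diagonal: `(λ·Id - ᵘU)^{(u)}`. -/
noncomputable def hMatC (T : Set Word) (U : Word → Word → ℝ) (lam : ℂ) (u : Word) :
    Matrix (Fin u.length) (Fin u.length) ℂ :=
  Matrix.of fun i j =>
    (if i = j then lam else 0) -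
      (if (i : ℕ) ≤ (j : ℕ) + 1 then
        ((descWeight T U (u.take i) (u.take j) : ℝ) : ℂ) -
          ((descWeight T U (u.take i) (u.take ((j : ℕ) + 1)) : ℝ) : ℂ)
       else 0)

/-- `π^{(λ)}(u) = det((λ·Id - ᵘU)^{(u)}) / ∏_{∅ ≠ v ⪯ u} U(v, p(v))`. -/
noncomputable def piLam (T : Set Word) (U : Word → Word → ℝ) (lam : ℂ) (u : Word) : ℂ :=
  (hMatC T U lam u).det /
    ∏ k ∈ Finset.range u.length, ((U (u.take (k + 1)) (u.take k) : ℝ) : ℂ)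

/-- The measure `π̄` of a random walk: `π̄(u) = ∏_j M(u[j-1],u[j]) / M(u[j],u[j-1])`. -/
noncomputable def rwInv (M : Word → Word → ℝ) (u : Word) : ℝ :=
  ∏ k ∈ Finset.range u.length, (M (u.take k) (u.take (k + 1)) / M (u.take (k + 1)) (u.take k))


/-!
Under the AUD condition a path can leave a subtree `T_u` only along the edge from `u` to its
parent, and can enter a subtree `T_v` only by a jump from a strict ancestor of `v`. Following a
path from `u` to the root, resp. from the root to `v`, up to its first exit from `T_u`, resp. its
first entry into `T_v`, gives (a) and (b). Conversely, (a) lets the chain climb from any node to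
each of its ancestors, and (b) reaches every `v` from the root by induction on `|v|`: reach the
strict ancestor given by (b), jump into `T_v`, then climb back to `v`.
-/

lemma List.IsPrefix.prefix_dropLast {α : Type*} {v w : List α} (h : v <+: w) (hne : v ≠ w) :
    v <+: w.dropLast := by
  obtain ⟨t, rfl⟩ := h
  have ht : t ≠ [] := by rintro rfl; simp at hne
  rw [List.dropLast_append_of_ne_nil ht]
  exact List.prefix_append _ _

lemma Relation.ReflTransGen.exists_exit {α : Type*} {r : α → α → Prop} {p : α → Prop}
    {a b : α} (h : Relation.ReflTransGen r a b) (ha : p a) (hb : ¬ p b) :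
    ∃ x y, p x ∧ ¬ p y ∧ r x y := by
  induction h with
  | refl => exact absurd ha hb
  | @tail b c _ hbc ih =>
    by_cases hpb : p b
    · exact ⟨b, c, hpb, hb, hbc⟩
    · exact ih hpb

def Step (T : Set Word) (U : Word → Word → ℝ) (u v : Word) : Prop :=
  u ∈ T ∧ v ∈ T ∧ 0 < U u v

lemma irreducibleOn_iff_reflTransGen {T : Set Word} {U : Word → Word → ℝ} :
    IrreducibleOn T U ↔ ∀ u ∈ T, ∀ v ∈ T, Relation.ReflTransGen (Step T U) u v := by
  refine ⟨fun h u hu v hv => ?_, fun h u hu v hv => ?_⟩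
  · obtain ⟨n, x, rfl, rfl, hxT, hxU⟩ := h u hu v hv
    have hsteps : Relation.ReflTransGen (fun i j => Step T U (x i) (x j)) 0 n :=
      reflTransGen_of_succ_of_le _ (fun k hk => by
        rw [Set.mem_Ico] at hk
        exact ⟨hxT k hk.2.le, hxT (k + 1) hk.2, hxU k hk.2⟩) (Nat.zero_le n)
    exact hsteps.lift x fun _ _ h => h
  · induction h u hu v hv using Relation.ReflTransGen.head_induction_on with
    | refl =>
      exact ⟨0, fun _ => v, rfl, rfl, fun _ _ => hv, fun _ hk => (Nat.not_lt_zero _ hk).elim⟩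
    | @head a b hab _ ih =>
      obtain ⟨n, x, hx0, hxn, hxT, hxU⟩ := ih hab.2.1
      refine ⟨n + 1, fun | 0 => a | k + 1 => x k, rfl, hxn, ?_, ?_⟩
      · rintro (_ | k) hk
        exacts [hab.1, hxT k (by omega)]
      · rintro (_ | k) hk
        exacts [by simpa [hx0] using hab.2.2, hxU k (by omega)]

section AUD

variable {T : Set Word} {U : Word → Word → ℝ}

lemma IsAUD.eq_of_step_out_of_desc (hA : IsAUD T U) {u x y : Word} (hx : x ∈ desc T u)
    (hy : y ∈ T) (hyu : y ∉ desc T u) (hxy : 0 < U x y) : x = u ∧ y = par x := by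
  rcases hA x hx.1 y hy hxy with hpar | hdesc
  · refine ⟨by_contra fun hxu => hyu ⟨hy, ?_⟩, hpar⟩
    exact hpar ▸ hx.2.prefix_dropLast (Ne.symm hxu)
  · exact absurd ⟨hy, hx.2.trans hdesc.2⟩ hyu

lemma IsAUD.prefix_of_step_into_desc (hA : IsAUD T U) {v x y : Word} (hx : x ∈ T)
    (hxv : x ∉ desc T v) (hy : y ∈ desc T v) (hxy : 0 < U x y) : x <+: v ∧ x ≠ v := by
  rcases hA x hx y hy.1 hxy with hpar | hdesc
  · exact absurd ⟨hx, hy.2.trans (hpar ▸ List.dropLast_prefix x)⟩ hxv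
  · rcases List.prefix_or_prefix_of_prefix hdesc.2 hy.2 with hxv' | hvx
    · exact ⟨hxv', by rintro rfl; exact hxv ⟨hx, List.prefix_refl x⟩⟩
    · exact absurd ⟨hx, hvx⟩ hxv

lemma reflTransGen_step_of_prefix (hpref : ∀ u ∈ T, ∀ v : Word, v <+: u → v ∈ T)
    (hup : ∀ u ∈ T, u ≠ [] → 0 < U u (par u)) :
    ∀ w ∈ T, ∀ v, v <+: w → Relation.ReflTransGen (Step T U) w v := by
  intro w
  induction w using List.reverseRecOn with
  | nil => rintro - v hv; rw [List.prefix_nil.mp hv]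
  | append_singleton w i ih =>
    intro hwi v hv
    rcases List.prefix_concat_iff.mp hv with rfl | hvw
    · rfl
    have hw : w ∈ T := hpref _ hwi w (List.prefix_append w [i])
    have hstep : Step T U (w ++ [i]) w := by
      refine ⟨hwi, hw, ?_⟩
      simpa [par] using hup _ hwi (List.concat_ne_nil i w)
    exact .head hstep (ih hw v hvw)

lemma reflTransGen_step_nil_left (hpref : ∀ u ∈ T, ∀ v : Word, v <+: u → v ∈ T)
    (hup : ∀ u ∈ T, u ≠ [] → 0 < U u (par u))
    (hdown : ∀ v ∈ T, v ≠ [] →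
      ∃ u ∈ T, u <+: v ∧ u ≠ v ∧ ∃ w ∈ desc T v, 0 < U u w) :
    ∀ v ∈ T, Relation.ReflTransGen (Step T U) [] v := by
  intro v
  induction hn : v.length using Nat.strong_induction_on generalizing v with
  | _ n ih =>
    intro hv
    rcases eq_or_ne v [] with rfl | hv0
    · rfl
    obtain ⟨u, hu, huv, hne, w, hw, huw⟩ := hdown v hv hv0
    have hlen : u.length < n := hn ▸ lt_of_le_of_ne huv.length_le (mt huv.eq_of_length hne)
    exact (ih _ hlen u rfl hu).tail ⟨hu, hw.1, huw⟩ |>.trans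
      (reflTransGen_step_of_prefix hpref hup w hw.1 v hw.2)

end AUD

theorem aud_irreducible_iff_general (T : Set Word) (hT : IsTree T) (U : Word → Word → ℝ)
    (hA : IsAUD T U) :
    IrreducibleOn T U ↔
      ((∀ u ∈ T, u ≠ [] → 0 < U u (par u)) ∧
       (∀ v ∈ T, v ≠ [] → ∃ u ∈ T, u <+: v ∧ u ≠ v ∧ ∃ w ∈ desc T v, 0 < U u w)) := by
  obtain ⟨hroot, hpref, -⟩ := hT
  rw [irreducibleOn_iff_reflTransGen]
  constructor
  · intro hirr
    refine ⟨fun u hu hu0 => ?_, fun v hv hv0 => ?_⟩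
    · obtain ⟨x, y, hx, hy, -, hyT, hxy⟩ := (hirr u hu [] hroot).exists_exit
        (p := (· ∈ desc T u)) ⟨hu, List.prefix_refl u⟩
        (hu0 ∘ List.prefix_nil.mp ∘ And.right)
      obtain ⟨rfl, rfl⟩ := hA.eq_of_step_out_of_desc hx hyT hy hxy
      exact hxy
    · obtain ⟨x, y, hx, hy, hxT, -, hxy⟩ := (hirr [] hroot v hv).exists_exit
        (p := (· ∉ desc T v)) (hv0 ∘ List.prefix_nil.mp ∘ And.right)
        (not_not.mpr ⟨hv, List.prefix_refl v⟩)
      rw [not_not] at hy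
      obtain ⟨hxv, hne⟩ := hA.prefix_of_step_into_desc hxT hx hy hxy
      exact ⟨x, hxT, hxv, hne, y, hy, hxy⟩
  · rintro ⟨hup, hdown⟩ u hu v hv
    exact (reflTransGen_step_of_prefix hpref hup u hu [] u.nil_prefix).trans
      (reflTransGen_step_nil_left hpref hup hdown v hv)

theorem aud_irreducible_iff (T : Set Word) (hT : IsTree T) (U : Word → Word → ℝ)
    (hM : IsTransMatrix T U) (hA : IsAUD T U) :
    IrreducibleOn T U ↔
      ((∀ u ∈ T, u ≠ [] → 0 < U u (par u)) ∧
       (∀ v ∈ T, v ≠ [] → ∃ u ∈ T, u <+: v ∧ u ≠ v ∧ ∃ w ∈ desc T v, 0 < U u w)) :=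
  aud_irreducible_iff_general T hT U hA
end

section
/- Let T be a rooted locally finite tree and D an almost lower-directed (ALD) transition matrix on T. Then D is irreducible if and only if both of the following hold: (a) for every node u ≠ ∅ one has D(p(u), u) > 0, and (b) for every node v ≠ ∅ there exist a descendant w ∈ T_v of v and a strict ancestor u of v (u ∈ [[∅,v]], u ≠ v) such that D(w, u) > 0. -/
open scoped BigOperators ENNReal

/-!
Under (ALD) a walk can leave the subtree `T_v` only by a jump to a strict ancestor of `v`, and
can enter `T_u` only through the edge `p(u) → u`; walks from `v` to the root and from `p(u)`
to `u` must do so, which gives (b) and (a). Conversely, (a) lets the walk descend from any node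
to any of its descendants, and then (b) lets it reach a strictly shorter ancestor; hence every
node reaches the root, and the root reaches every node.
-/

open Relation

namespace Relation.ReflTransGen

variable {α : Type*} {r : α → α → Prop} {a b : α}

theorem exists_seq (h : ReflTransGen r a b) :
    ∃ (n : ℕ) (x : ℕ → α), x 0 = a ∧ x n = b ∧ ∀ k < n, r (x k) (x (k + 1)) := by
  induction h with
  | refl => exact ⟨0, fun _ => a, rfl, rfl, by simp⟩
  | @tail c d _ hcd ih =>
    obtain ⟨n, x, hx0, hxn, hx⟩ := ih
    refine ⟨n + 1, fun k => if k ≤ n then x k else d, by simp [hx0], by simp, fun k hk => ?_⟩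
    rcases Nat.lt_or_ge k n with hkn | hkn
    · simpa [hkn.le, Nat.succ_le_of_lt hkn] using hx k hkn
    · obtain rfl : k = n := by omega
      simpa [hxn] using hcd

theorem of_seq {n : ℕ} {x : ℕ → α} (hx : ∀ k < n, r (x k) (x (k + 1))) :
    ReflTransGen r (x 0) (x n) := by
  induction n with
  | zero => exact .refl
  | succ n ih => exact (ih fun k hk => hx k (by omega)).tail (hx n (by omega))

theorem exists_rel_of_not {p : α → Prop} (h : ReflTransGen r a b) (ha : p a) (hb : ¬ p b) :
    ∃ x y, r x y ∧ p x ∧ ¬ p y := by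
  induction h using ReflTransGen.head_induction_on with
  | refl => exact absurd ha hb
  | @head a c hac _ ih =>
    by_cases hc : p c
    · exact ih hc
    · exact ⟨a, c, hac, ha, hc⟩

end Relation.ReflTransGen

def PosStep (T : Set Word) (D : Word → Word → ℝ) (u v : Word) : Prop :=
  u ∈ T ∧ v ∈ T ∧ 0 < D u v

variable {T : Set Word} {D : Word → Word → ℝ}

theorem irreducibleOn_iff_reflTransGen_s1 :
    IrreducibleOn T D ↔ ∀ u ∈ T, ∀ v ∈ T, ReflTransGen (PosStep T D) u v := by
  refine forall₂_congr fun u hu => forall₂_congr fun v _ => ⟨?_, fun h => ?_⟩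
  · rintro ⟨n, x, rfl, rfl, hxT, hxD⟩
    exact .of_seq fun k hk => ⟨hxT k hk.le, hxT (k + 1) hk, hxD k hk⟩
  · obtain ⟨n, x, hx0, hxn, hx⟩ := h.exists_seq
    refine ⟨n, x, hx0, hxn, fun k hk => ?_, fun k hk => (hx k hk).2.2⟩
    cases k with
    | zero => exact hx0 ▸ hu
    | succ k => exact (hx k (by omega)).2.1

theorem IsTree.mem_par (hT : IsTree T) {u : Word} (hu : u ∈ T) : par u ∈ T :=
  hT.2.1 u hu _ (List.dropLast_prefix u)

namespace IsALD

variable (hA : IsALD T D) {x y : Word}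
include hA

theorem eq_of_step_into_desc {u : Word} (hxy : PosStep T D x y) (hx : ¬ u <+: x)
    (hy : u <+: y) : y = u ∧ x = par u := by
  rcases hA x hxy.1 y hxy.2.1 hxy.2.2 with ⟨-, i, rfl⟩ | hyx
  · rcases List.prefix_concat_iff.mp hy with rfl | hux
    · exact ⟨rfl, List.dropLast_concat.symm⟩
    · exact absurd hux hx
  · exact absurd (hy.trans hyx) hx

theorem prefix_ne_of_step_out_of_desc {v : Word} (hxy : PosStep T D x y) (hx : v <+: x)
    (hy : ¬ v <+: y) : y <+: v ∧ y ≠ v := by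
  refine ⟨?_, fun hyv => hy (hyv ▸ List.prefix_refl y)⟩
  rcases hA x hxy.1 y hxy.2.1 hxy.2.2 with ⟨-, i, rfl⟩ | hyx
  · exact absurd (hx.trans (List.prefix_append x [i])) hy
  · exact (List.prefix_or_prefix_of_prefix hyx hx).resolve_right hy

theorem pos_par_of_reflTransGen {u : Word} (hne : u ≠ [])
    (h : ReflTransGen (PosStep T D) (par u) u) : 0 < D (par u) u := by
  have hpu : ¬ u <+: par u := fun hpre => by
    have := hpre.length_le
    rw [par, List.length_dropLast] at this
    exact hne (List.length_eq_zero_iff.mp (by omega))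
  obtain ⟨x, y, hxy, hx, hy⟩ :=
    h.exists_rel_of_not (p := fun x => ¬ u <+: x) hpu (not_not_intro (List.prefix_refl u))
  obtain ⟨rfl, rfl⟩ := hA.eq_of_step_into_desc hxy hx (not_not.mp hy)
  exact hxy.2.2

theorem exists_exit_of_reflTransGen {v : Word} (hne : v ≠ [])
    (h : ReflTransGen (PosStep T D) v []) :
    ∃ w ∈ desc T v, ∃ u ∈ T, u <+: v ∧ u ≠ v ∧ 0 < D w u := by
  obtain ⟨x, y, hxy, hx, hy⟩ :=
    h.exists_rel_of_not (List.prefix_refl v) (fun hv => hne (List.prefix_nil.mp hv))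
  obtain ⟨hyv, hne_yv⟩ := hA.prefix_ne_of_step_out_of_desc hxy hx hy
  exact ⟨x, ⟨hxy.1, hx⟩, y, hxy.2.1, hyv, hne_yv, hxy.2.2⟩

end IsALD

section Reachability

variable (hT : IsTree T) (hpar : ∀ u ∈ T, u ≠ [] → 0 < D (par u) u)
include hT hpar

theorem reflTransGen_of_prefix {v w : Word} (hvw : v <+: w) (hw : w ∈ T) :
    ReflTransGen (PosStep T D) v w := by
  obtain ⟨l, rfl⟩ := hvw
  induction l using List.reverseRecOn with
  | nil => simpa using ReflTransGen.refl
  | append_singleton l i ih =>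
    rw [← List.append_assoc] at hw ⊢
    have hpar_eq : par (v ++ l ++ [i]) = v ++ l := List.dropLast_concat
    have hvl : v ++ l ∈ T := hpar_eq ▸ hT.mem_par hw
    have hstep := hpar _ hw (by simp)
    rw [hpar_eq] at hstep
    exact (ih hvl).tail ⟨hvl, hw, hstep⟩

theorem reflTransGen_nil
    (hexit : ∀ v ∈ T, v ≠ [] → ∃ w ∈ desc T v, ∃ u ∈ T, u <+: v ∧ u ≠ v ∧ 0 < D w u)
    {z : Word} (hz : z ∈ T) : ReflTransGen (PosStep T D) z [] := by
  induction hn : z.length using Nat.strong_induction_on generalizing z with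
  | _ n ih =>
    rcases eq_or_ne z [] with rfl | hne
    · exact .refl
    obtain ⟨w, ⟨hw, hzw⟩, u, hu, huz, hne_uz, hwu⟩ := hexit z hz hne
    have hlen : u.length < n := hn ▸ lt_of_le_of_ne huz.length_le
      (fun h => hne_uz (huz.eq_of_length h))
    exact (reflTransGen_of_prefix hT hpar hzw hw).trans
      (.head ⟨hw, hu, hwu⟩ (ih _ hlen hu rfl))

end Reachability

theorem ald_irreducible_iff_general (T : Set Word) (hT : IsTree T) (D : Word → Word → ℝ)
    (hA : IsALD T D) :
    IrreducibleOn T D ↔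
      ((∀ u ∈ T, u ≠ [] → 0 < D (par u) u) ∧
       (∀ v ∈ T, v ≠ [] → ∃ w ∈ desc T v, ∃ u ∈ T, u <+: v ∧ u ≠ v ∧ 0 < D w u)) := by
  rw [irreducibleOn_iff_reflTransGen_s1]
  refine ⟨fun hirr => ⟨fun u hu hne => ?_, fun v hv hne => ?_⟩, fun ⟨hpar, hexit⟩ u hu v hv => ?_⟩
  · exact hA.pos_par_of_reflTransGen hne (hirr _ (hT.mem_par hu) u hu)
  · exact hA.exists_exit_of_reflTransGen hne (hirr v hv [] hT.1)
  · exact (reflTransGen_nil hT hpar hexit hu).trans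
      (reflTransGen_of_prefix hT hpar List.nil_prefix hv)

theorem ald_irreducible_iff (T : Set Word) (hT : IsTree T) (D : Word → Word → ℝ)
    (hM : IsTransMatrix T D) (hA : IsALD T D) :
    IrreducibleOn T D ↔
      ((∀ u ∈ T, u ≠ [] → 0 < D (par u) u) ∧
       (∀ v ∈ T, v ≠ [] → ∃ w ∈ desc T v, ∃ u ∈ T, u <+: v ∧ u ≠ v ∧ 0 < D w u)) :=
  ald_irreducible_iff_general T hT D hA
end

section
/- Let U be an irreducible AUD transition matrix on a finite or infinite rooted locally finite tree T, and let π be its h-invariant measure. Then π(u) > 0 for every u ∈ T, and π is an invariant measure of U: for every u ∈ T, π(u) = ∑_{v ∈ [[∅,u]]} π(v) U(v,u) + ∑_{c ∈ c_T(u)} π(c) U(c,u) (equivalently π(u) = ∑_{v∈T} π(v) U(v,u), since for an AUD matrix only ancestors and children of u can make a transition to u). -/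
open scoped BigOperators ENNReal

/-!
Expanding the upper Hessenberg matrix `Id - ᵘU` along its last column and rescaling by the
edge weights `U(v, p(v))` gives the recursion `π(u) U(u, p(u)) = ∑_{v ≺ u} π(v) U(v, T_u)` over
the strict ancestors `v` of `u`. Irreducibility makes every `U(v, p(v))` and at least one
`U(v, T_u)` positive, so `π > 0` by induction on `|u|`. Since `U(u, p(u)) + U(u, T_u) = 1`, the
recursion also reads `π(u) = ∑_{v ⪯ u} π(v) U(v, T_u)`; splitting `T_u` into `u` and the subtrees
`T_c` of its children and applying the recursion at each child `c` turns this into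
`π(u) = ∑_{v ⪯ u} π(v) U(v, u) + ∑_c π(c) U(c, u)`, the invariance equation.
-/

section Hessenberg

variable {R : Type*} [CommRing R]

noncomputable def leadingMinor (f : ℕ → ℕ → R) (n : ℕ) : R :=
  (Matrix.of fun i j : Fin n => f i j).det

theorem leadingMinor_congr {f g : ℕ → ℕ → R} {n : ℕ}
    (h : ∀ i < n, ∀ j < n, f i j = g i j) : leadingMinor f n = leadingMinor g n := by
  unfold leadingMinor
  congr 1
  ext i j
  exact h i i.isLt j j.isLt

theorem det_submatrix_last_castSucc_last (f : ℕ → ℕ → R) (n : ℕ) :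
    ((Matrix.of fun i j : Fin (n + 2) => f i j).submatrix (Fin.last (n + 1)).succAbove
      (Fin.last n).castSucc.succAbove).det
      = leadingMinor (fun i j => f i (if j < n then j else j + 1)) (n + 1) := by
  simp only [Fin.succAbove_last, leadingMinor]
  congr 1
  ext a b
  simp only [Matrix.submatrix_apply, Matrix.of_apply]
  congr 1
  rcases lt_or_ge (b : ℕ) n with hb | hb
  · rw [Fin.succAbove_of_castSucc_lt _ _ (by simp [Fin.lt_def, hb])]; simp [hb]
  · rw [Fin.succAbove_of_le_castSucc _ _ (by simp [Fin.le_def, hb])]; simp [hb.not_gt]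

theorem leadingMinor_succ_of_hessenberg (n : ℕ) (f : ℕ → ℕ → R)
    (hf : ∀ i j, j + 1 < i → i ≤ n → f i j = 0) :
    leadingMinor f (n + 1) = ∑ i ∈ Finset.range (n + 1),
      (-1) ^ (n - i) * f i n * leadingMinor f i * ∏ k ∈ Finset.Ico i n, f (k + 1) k := by
  induction n generalizing f with
  | zero => simp [leadingMinor]
  | succ n ih =>
    -- deleting the last row and the column `n` leaves a Hessenberg matrix of the same shape
    set g : ℕ → ℕ → R := fun i j => f i (if j < n then j else j + 1) with hg
    have hg_hess : ∀ i j, j + 1 < i → i ≤ n → g i j = 0 := fun i j hji hi => by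
      simp only [hg, if_pos (show j < n by omega)]
      exact hf i j hji (by omega)
    have hg_minor : ∀ i ≤ n, leadingMinor g i = leadingMinor f i := fun i hi =>
      leadingMinor_congr fun a _ b hb => by simp only [hg, if_pos (show b < n by omega)]
    have hg_sub : ∀ k < n, g (k + 1) k = f (k + 1) k := fun k hk => by simp only [hg, if_pos hk]
    set A : Matrix (Fin (n + 2)) (Fin (n + 2)) R := Matrix.of fun i j => f i j
    have hdel_last : (A.submatrix (Fin.last (n + 1)).succAbove (Fin.last (n + 1)).succAbove).det
        = leadingMinor f (n + 1) := by
      simp only [Fin.succAbove_last]; rfl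
    have hrest : ∀ j : Fin n, A (Fin.last (n + 1)) j.castSucc.castSucc = 0 := fun j =>
      hf _ _ (by simp) le_rfl
    show A.det = _
    rw [Matrix.det_succ_row A (Fin.last (n + 1)), Fin.sum_univ_castSucc, Fin.sum_univ_castSucc,
      Finset.sum_eq_zero (fun j _ => by rw [hrest]; ring), zero_add, hdel_last,
      det_submatrix_last_castSucc_last, ih g hg_hess, Finset.sum_range_succ _ (n + 1)]
    simp only [Fin.val_last, Fin.val_castSucc, Matrix.of_apply, A, Nat.sub_self, pow_zero,
      Finset.Ico_self, Finset.prod_empty, Finset.mul_sum]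
    rw [(Odd.neg_one_pow ⟨n, by ring⟩ : (-1 : R) ^ (n + 1 + n) = -1),
      (Even.neg_one_pow ⟨n + 1, by ring⟩ : (-1 : R) ^ (n + 1 + (n + 1)) = 1)]
    congr 1
    · refine Finset.sum_congr rfl fun i hi => ?_
      have hi : i ≤ n := Nat.lt_succ_iff.mp (Finset.mem_range.mp hi)
      rw [hg_minor i hi, Finset.prod_congr rfl fun k hk => hg_sub k (Finset.mem_Ico.mp hk).2,
        Finset.prod_Ico_succ_top hi, show n + 1 - i = n - i + 1 by omega, pow_succ]
      simp only [hg, lt_irrefl, if_false]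
      ring
    · ring

/-- With `D i j = U(u_i, T_{u_j})` for the prefixes `u_i` of a word `u`, this is the matrix
`Id - ᵘU` with the column of `u` deleted. -/
def cumulMat (D : ℕ → ℕ → R) (i j : ℕ) : R :=
  (if i = j then 1 else 0) - if i ≤ j + 1 then D i j - D i (j + 1) else 0

theorem cumulMat_hessenberg (D : ℕ → ℕ → R) {i j : ℕ} (h : j + 1 < i) :
    cumulMat D i j = 0 := by
  simp [cumulMat, show i ≠ j by omega, show ¬i ≤ j + 1 by omega]

theorem leadingMinor_cumulMat_expand (D : ℕ → ℕ → R) {c : ℕ}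
    (hD : ∀ k < c, D (k + 1) k = 1) :
    leadingMinor (cumulMat D) (c + 1) = ∑ i ∈ Finset.range (c + 1),
      cumulMat D i c * leadingMinor (cumulMat D) i *
        ∏ k ∈ Finset.Ico i c, (1 - D (k + 1) (k + 1)) := by
  rw [leadingMinor_succ_of_hessenberg c _ fun i j h _ => cumulMat_hessenberg D h]
  refine Finset.sum_congr rfl fun i _ => ?_
  have hsub : ∀ k ∈ Finset.Ico i c, cumulMat D (k + 1) k = -(1 - D (k + 1) (k + 1)) :=
    fun k hk => by simp [cumulMat, hD k (Finset.mem_Ico.mp hk).2]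
  have hsq : ((-1 : R) ^ (c - i)) ^ 2 = 1 := by rw [← pow_mul, pow_mul', neg_one_sq, one_pow]
  rw [Finset.prod_congr rfl hsub, Finset.prod_neg, Nat.card_Ico]
  linear_combination (cumulMat D i c * leadingMinor (cumulMat D) i *
    ∏ k ∈ Finset.Ico i c, (1 - D (k + 1) (k + 1))) * hsq

theorem leadingMinor_cumulMat_succ (D : ℕ → ℕ → R) (hD₀ : D 0 0 = 1) {c : ℕ}
    (hD : ∀ k < c, D (k + 1) k = 1) :
    leadingMinor (cumulMat D) (c + 1) = ∑ i ∈ Finset.range (c + 1),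
      D i (c + 1) * leadingMinor (cumulMat D) i *
        ∏ k ∈ Finset.Ico i c, (1 - D (k + 1) (k + 1)) := by
  induction c with
  | zero => simp [leadingMinor, cumulMat, hD₀]
  | succ c ih =>
    have hexpand := leadingMinor_cumulMat_expand D hD
    set M := leadingMinor (cumulMat D)
    set P : ℕ → ℕ → R := fun i c => ∏ k ∈ Finset.Ico i c, (1 - D (k + 1) (k + 1))
    -- the entry `δ_{i,c+1} - D i (c + 1) + D i (c + 2)` splits the sum in three, and by the
    -- induction hypothesis the first two parts cancel
    have hdiag : ∑ i ∈ Finset.range (c + 1 + 1),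
        (if i = c + 1 then 1 else 0) * M i * P i (c + 1) = M (c + 1) := by
      simp [P, Finset.sum_ite_eq']
    have hprev :
        ∑ i ∈ Finset.range (c + 1 + 1), D i (c + 1) * M i * P i (c + 1) = M (c + 1) := by
      have hP : ∀ i ∈ Finset.range (c + 1), P i (c + 1) = P i c * (1 - D (c + 1) (c + 1)) :=
        fun i hi => Finset.prod_Ico_succ_top (Nat.lt_succ_iff.mp (Finset.mem_range.mp hi)) _
      rw [Finset.sum_range_succ, Finset.sum_congr rfl fun i hi => by rw [hP i hi, ← mul_assoc],
        ← Finset.sum_mul, ← ih fun k hk => hD k (by omega)]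
      simp only [P, Finset.Ico_self, Finset.prod_empty]
      ring
    calc M (c + 1 + 1)
        = ∑ i ∈ Finset.range (c + 1 + 1), (if i = c + 1 then 1 else 0) * M i * P i (c + 1)
          - ∑ i ∈ Finset.range (c + 1 + 1), D i (c + 1) * M i * P i (c + 1)
          + ∑ i ∈ Finset.range (c + 1 + 1), D i (c + 1 + 1) * M i * P i (c + 1) := by
          rw [hexpand, ← Finset.sum_sub_distrib, ← Finset.sum_add_distrib]
          refine Finset.sum_congr rfl fun i hi => ?_
          simp only [cumulMat, if_pos (Finset.mem_range.mp hi).le]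
          ring
      _ = _ := by rw [hdiag, hprev, sub_self, zero_add]

end Hessenberg

theorem take_mem_of_isTree {T : Set Word} (hT : IsTree T) {u : Word} (hu : u ∈ T) (j : ℕ) :
    u.take j ∈ T :=
  hT.2.1 u hu _ (List.take_prefix _ _)

theorem par_take_succ {u : Word} {k : ℕ} (hk : k < u.length) :
    par (u.take (k + 1)) = u.take k := by
  rw [par, List.dropLast_eq_take, List.length_take, List.take_take]
  congr 1
  omega

theorem take_succ_ne_nil {u : Word} {k : ℕ} (hk : k < u.length) : u.take (k + 1) ≠ [] :=
  List.ne_nil_of_length_pos (by rw [List.length_take_of_le hk]; omega)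

theorem prefix_par_of_prefix_of_ne {a b : Word} (h : b <+: a) (hne : b ≠ a) : b <+: par a := by
  have hlt : b.length < a.length := lt_of_le_of_ne h.length_le fun hl => hne (h.eq_of_length hl)
  rw [List.prefix_iff_eq_take] at h ⊢
  rw [par, List.dropLast_eq_take, List.take_take, min_eq_left (by omega)]
  exact h

theorem eq_of_append_singleton_prefix {α : Type*} {b w : List α} {i j : α} (hi : b ++ [i] <+: w)
    (hj : b ++ [j] <+: w) : i = j := by
  have h := (List.prefix_of_prefix_length_le hi hj (by simp)).eq_of_length (by simp)
  simpa using h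

theorem exists_lt_not_and_succ {P : ℕ → Prop} {n : ℕ} (h₀ : ¬P 0) (hn : P n) :
    ∃ k < n, ¬P k ∧ P (k + 1) := by
  induction n with
  | zero => exact absurd hn h₀
  | succ n ih =>
    by_cases h : P n
    · obtain ⟨k, hk, hPk⟩ := ih h
      exact ⟨k, by omega, hPk⟩
    · exact ⟨n, by omega, h, hn⟩

section DescWeight

variable {T : Set Word} {U : Word → Word → ℝ}

theorem descWeight_eq_tsum_indicator (a b : Word) :
    descWeight T U a b = ∑' w, (desc T b).indicator (U a) w :=
  tsum_subtype _ _

theorem summable_indicator_desc (hM : IsTransMatrix T U) {a : Word} (ha : a ∈ T) (b : Word) :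
    Summable ((desc T b).indicator (U a)) := by
  have h := (summable_subtype_iff_indicator.mp (hM.2 a ha).summable).indicator (desc T b)
  rwa [Set.indicator_indicator, Set.inter_eq_left.mpr fun _ hw => hw.1] at h

theorem descWeight_nonneg (hM : IsTransMatrix T U) {a : Word} (ha : a ∈ T) (b : Word) :
    0 ≤ descWeight T U a b :=
  tsum_nonneg fun w => hM.1 a ha w w.2.1

theorem le_descWeight (hM : IsTransMatrix T U) {a b w : Word} (ha : a ∈ T)
    (hw : w ∈ desc T b) : U a w ≤ descWeight T U a b :=
  (summable_subtype_iff_indicator.mpr (summable_indicator_desc hM ha b)).le_tsum ⟨w, hw⟩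
    fun v _ => hM.1 a ha v v.2.1

theorem descWeight_nil (hM : IsTransMatrix T U) {a : Word} (ha : a ∈ T) :
    descWeight T U a [] = 1 := by
  have hdesc : desc T [] = T := by ext w; simp [desc]
  rw [descWeight, hdesc]
  exact (hM.2 a ha).tsum_eq

theorem U_eq_zero_of_ne_par_of_notMem_desc (hM : IsTransMatrix T U) (hA : IsAUD T U) {a w : Word}
    (ha : a ∈ T) (hw : w ∈ T) (hpar : w ≠ par a) (hdesc : w ∉ desc T a) : U a w = 0 := by
  by_contra h
  rcases hA a ha w hw ((hM.1 a ha w hw).lt_of_ne' h) with h' | h' <;> contradiction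

/-- From `a`, an AUD chain only moves to `p(a)` or into `T_a`, and both lie in `T_b`. -/
theorem descWeight_of_prefix_of_ne (hT : IsTree T) (hM : IsTransMatrix T U) (hA : IsAUD T U)
    {a b : Word} (ha : a ∈ T) (hb : b <+: a) (hne : b ≠ a) :
    descWeight T U a b = U a (par a) + descWeight T U a a := by
  have hpar_mem : par a ∈ T := hT.2.1 a ha _ (List.dropLast_prefix a)
  have hpar_notMem : par a ∉ desc T a := fun h => by
    have hlen := h.2.length_le
    have hpos : 0 < a.length := List.length_pos_iff.mpr fun h => hne (by simp_all)
    rw [par, List.length_dropLast] at hlen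
    omega
  have hsplit : ∀ w, (desc T b).indicator (U a) w
      = (if w = par a then U a (par a) else 0) + (desc T a).indicator (U a) w := by
    intro w
    by_cases hw : w = par a
    · have hpar_desc : par a ∈ desc T b := ⟨hpar_mem, prefix_par_of_prefix_of_ne hb hne⟩
      simp [hw, Set.indicator_of_notMem hpar_notMem, Set.indicator_of_mem hpar_desc]
    by_cases hwa : w ∈ desc T a
    · have hwb : w ∈ desc T b := ⟨hwa.1, hb.trans hwa.2⟩
      simp [hw, Set.indicator_of_mem hwa, Set.indicator_of_mem hwb]
    by_cases hwb : w ∈ desc T b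
    · simp [hw, Set.indicator_of_mem hwb, Set.indicator_of_notMem hwa,
        U_eq_zero_of_ne_par_of_notMem_desc hM hA ha hwb.1 hw hwa]
    · simp [hw, Set.indicator_of_notMem hwb, Set.indicator_of_notMem hwa]
  rw [descWeight_eq_tsum_indicator, descWeight_eq_tsum_indicator, tsum_congr hsplit,
    Summable.tsum_add (hasSum_ite_eq _ _).summable (summable_indicator_desc hM ha a), tsum_ite_eq]

theorem U_par_add_descWeight_self (hT : IsTree T) (hM : IsTransMatrix T U) (hA : IsAUD T U)
    {a : Word} (ha : a ∈ T) (hne : a ≠ []) : U a (par a) + descWeight T U a a = 1 := by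
  rw [← descWeight_of_prefix_of_ne hT hM hA ha List.nil_prefix hne.symm, descWeight_nil hM ha]

theorem descWeight_eq_one_of_prefix_of_ne (hT : IsTree T) (hM : IsTransMatrix T U)
    (hA : IsAUD T U) {a b : Word} (ha : a ∈ T) (hb : b <+: a) (hne : b ≠ a) :
    descWeight T U a b = 1 := by
  rw [descWeight_of_prefix_of_ne hT hM hA ha hb hne,
    U_par_add_descWeight_self hT hM hA ha fun h => hne (by simp_all)]

theorem descWeight_eq_add_sum_children (hT : IsTree T) (hM : IsTransMatrix T U) {a b : Word}
    (ha : a ∈ T) (hb : b ∈ T) :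
    descWeight T U a b = U a b + ∑ i ∈ (hT.2.2 b hb).toFinset, descWeight T U a (b ++ [i]) := by
  have hsplit : ∀ w, (desc T b).indicator (U a) w = (if w = b then U a b else 0)
      + ∑ i ∈ (hT.2.2 b hb).toFinset, (desc T (b ++ [i])).indicator (U a) w := by
    intro w
    by_cases hwb : w = b
    · subst hwb
      have hself : ∀ i, w ∉ desc T (w ++ [i]) := fun i h => by simpa using h.2.length_le
      simp [Set.indicator_of_mem (show w ∈ desc T w from ⟨hb, List.prefix_refl w⟩),
        Set.indicator_of_notMem (hself _)]
    by_cases hw : w ∈ desc T b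
    · obtain ⟨r, rfl⟩ := hw.2
      obtain ⟨i, t, rfl⟩ :=
        List.exists_cons_of_ne_nil (show r ≠ [] by rintro rfl; simp at hwb)
      have hwi : b ++ i :: t ∈ desc T (b ++ [i]) := ⟨hw.1, ⟨t, by simp⟩⟩
      have hi : i ∈ (hT.2.2 b hb).toFinset := by
        simpa using hT.2.1 _ hw.1 _ hwi.2
      rw [Finset.sum_eq_single_of_mem i hi fun j _ hji => Set.indicator_of_notMem
        (fun hwj => hji (eq_of_append_singleton_prefix hwj.2 hwi.2)) _]
      simp [hwb, Set.indicator_of_mem hw, Set.indicator_of_mem hwi]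
    · have hchild : ∀ i, w ∉ desc T (b ++ [i]) := fun i hwi =>
        hw ⟨hwi.1, (List.prefix_append b [i]).trans hwi.2⟩
      simp [hwb, Set.indicator_of_notMem hw, Set.indicator_of_notMem (hchild _)]
  rw [descWeight_eq_tsum_indicator, tsum_congr hsplit,
    Summable.tsum_add (hasSum_ite_eq _ _).summable
      (summable_sum fun i _ => summable_indicator_desc hM ha _),
    Summable.tsum_finsetSum fun i _ => summable_indicator_desc hM ha _, tsum_ite_eq]
  simp only [descWeight_eq_tsum_indicator]

end DescWeight

section Irreducible

variable {T : Set Word} {U : Word → Word → ℝ}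

/-- A path from `v` to the root must leave `T_v`, and an AUD chain can only do so through
the edge `v → p(v)`. -/
theorem U_par_pos (hT : IsTree T) (hA : IsAUD T U)
    (hI : IrreducibleOn T U) {v : Word} (hv : v ∈ T) (hne : v ≠ []) : 0 < U v (par v) := by
  obtain ⟨n, x, hx₀, hxn, hxT, hpos⟩ := hI v hv [] hT.1
  obtain ⟨k, hk, hin, hout⟩ := exists_lt_not_and_succ (P := fun k => ¬v <+: x k)
    (by simp [hx₀]) (by rw [hxn]; exact fun h => hne (List.prefix_nil.mp h))
  rw [not_not] at hin
  rcases hA _ (hxT k hk.le) _ (hxT _ hk) (hpos k hk) with hstep | hstep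
  · have hxk : x k = v := by
      by_contra h
      exact hout (hstep ▸ prefix_par_of_prefix_of_ne hin (Ne.symm h))
    rw [← hxk, ← hstep]
    exact hpos k hk
  · exact absurd (hin.trans hstep.2) hout

/-- A path from the root into `T_u` enters it by a jump from some strict ancestor of `u`. -/
theorem exists_descWeight_take_pos (hT : IsTree T) (hM : IsTransMatrix T U) (hA : IsAUD T U)
    (hI : IrreducibleOn T U) {u : Word} (hu : u ∈ T) (hne : u ≠ []) :
    ∃ j < u.length, 0 < descWeight T U (u.take j) u := by
  obtain ⟨n, x, hx₀, hxn, hxT, hpos⟩ := hI [] hT.1 u hu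
  obtain ⟨k, hk, hout, hin⟩ := exists_lt_not_and_succ (P := fun k => u <+: x k)
    (by rw [hx₀]; exact fun h => hne (List.prefix_nil.mp h)) (by rw [hxn])
  rcases hA _ (hxT k hk.le) _ (hxT _ hk) (hpos k hk) with hstep | hstep
  · exact absurd (hin.trans (hstep ▸ List.dropLast_prefix _)) hout
  rcases List.prefix_or_prefix_of_prefix hstep.2 hin with hxu | hux
  · refine ⟨(x k).length, lt_of_le_of_ne hxu.length_le fun hl => hout (hxu.eq_of_length hl ▸
      List.prefix_refl _), ?_⟩
    rw [← List.prefix_iff_eq_take.mp hxu]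
    exact (hpos k hk).trans_le (le_descWeight hM (hxT k hk.le) ⟨hxT _ hk, hin⟩)
  · exact absurd hux hout

end Irreducible

section HInvariant

variable {T : Set Word} {U : Word → Word → ℝ}

noncomputable def prefixWeight (T : Set Word) (U : Word → Word → ℝ) (u : Word) (i j : ℕ) :
    ℝ :=
  descWeight T U (u.take i) (u.take j)

theorem det_hMat (u : Word) :
    (hMat T U u).det = leadingMinor (cumulMat (prefixWeight T U u)) u.length := by
  unfold leadingMinor hMat
  congr 1
  ext i j
  simp [cumulMat, prefixWeight, Fin.ext_iff]

theorem hInv_take (u : Word) {j : ℕ} (hj : j ≤ u.length) :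
    hInv T U (u.take j) = leadingMinor (cumulMat (prefixWeight T U u)) j /
      ∏ k ∈ Finset.range j, U (u.take (k + 1)) (u.take k) := by
  have htake : ∀ i ≤ j, (u.take j).take i = u.take i := fun i hi => by
    rw [List.take_take, min_eq_left hi]
  have hlen : (u.take j).length = j := List.length_take_of_le hj
  rw [hInv, det_hMat, hlen]
  congr 1
  · exact leadingMinor_congr fun a ha b hb => by
      simp only [cumulMat, prefixWeight, htake a ha.le, htake b hb.le, htake (b + 1) hb]
  · exact Finset.prod_congr rfl fun k hk => by
      rw [htake k (Finset.mem_range.mp hk).le, htake (k + 1) (Finset.mem_range.mp hk)]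

theorem U_take_succ_take_pos (hT : IsTree T) (hA : IsAUD T U) (hI : IrreducibleOn T U)
    {u : Word} (hu : u ∈ T) {k : ℕ} (hk : k < u.length) : 0 < U (u.take (k + 1)) (u.take k) := by
  rw [← par_take_succ hk]
  exact U_par_pos hT hA hI (take_mem_of_isTree hT hu _) (take_succ_ne_nil hk)

theorem prefixWeight_succ_left_eq_one (hT : IsTree T) (hM : IsTransMatrix T U) (hA : IsAUD T U)
    {u : Word} (hu : u ∈ T) {k : ℕ} (hk : k < u.length) : prefixWeight T U u (k + 1) k = 1 := by
  refine descWeight_eq_one_of_prefix_of_ne hT hM hA (take_mem_of_isTree hT hu _)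
    ((List.prefix_take_le_iff hk).mpr k.le_succ) fun h => ?_
  have hlen := congrArg List.length h
  simp only [List.length_take] at hlen
  omega

theorem one_sub_prefixWeight_succ_self (hT : IsTree T) (hM : IsTransMatrix T U)
    (hA : IsAUD T U) {u : Word} (hu : u ∈ T) {k : ℕ} (hk : k < u.length) :
    1 - prefixWeight T U u (k + 1) (k + 1) = U (u.take (k + 1)) (u.take k) := by
  have h := U_par_add_descWeight_self hT hM hA (take_mem_of_isTree hT hu (k + 1))
    (take_succ_ne_nil hk)
  rw [par_take_succ hk] at h
  rw [prefixWeight]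
  linarith

theorem hInv_mul_U_par (hT : IsTree T) (hM : IsTransMatrix T U) (hA : IsAUD T U)
    (hI : IrreducibleOn T U) {u : Word} (hu : u ∈ T) (hne : u ≠ []) :
    hInv T U u * U u (par u)
      = ∑ j ∈ Finset.range u.length, hInv T U (u.take j) * descWeight T U (u.take j) u := by
  obtain ⟨m, hm⟩ : ∃ m, u.length = m + 1 :=
    Nat.exists_eq_succ_of_ne_zero (List.length_pos_iff.mpr hne).ne'
  have htop : u.take (m + 1) = u := List.take_of_length_le hm.le
  set D := prefixWeight T U u
  set Q : ℕ → ℝ := fun j => ∏ k ∈ Finset.range j, U (u.take (k + 1)) (u.take k)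
  have hQ_pos : ∀ j ≤ u.length, 0 < Q j := fun j hj => Finset.prod_pos fun k hk =>
    U_take_succ_take_pos hT hA hI hu ((Finset.mem_range.mp hk).trans_le hj)
  have hminor : ∀ j ≤ u.length, leadingMinor (cumulMat D) j = hInv T U (u.take j) * Q j :=
    fun j hj => by rw [hInv_take u hj, div_mul_cancel₀ _ (hQ_pos j hj).ne']
  calc hInv T U u * U u (par u) = leadingMinor (cumulMat D) (m + 1) / Q m := by
        have hpar : par u = u.take m := by
          simpa [htop] using par_take_succ (u := u) (k := m) (by omega)
        have hU : 0 < U u (par u) := U_par_pos hT hA hI hu hne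
        conv_lhs => rw [← htop, hInv_take u hm.ge, Finset.prod_range_succ, htop, ← hpar]
        rw [div_mul_eq_mul_div, mul_div_mul_right _ _ hU.ne']
    _ = ∑ j ∈ Finset.range (m + 1), hInv T U (u.take j) * descWeight T U (u.take j) u := by
        rw [leadingMinor_cumulMat_succ D (descWeight_nil hM hT.1)
          fun k hk => prefixWeight_succ_left_eq_one hT hM hA hu (by omega), Finset.sum_div]
        refine Finset.sum_congr rfl fun j hj => ?_
        have hj : j ≤ m := Nat.lt_succ_iff.mp (Finset.mem_range.mp hj)
        have hQ : Q j * ∏ k ∈ Finset.Ico j m, U (u.take (k + 1)) (u.take k) = Q m :=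
          Finset.prod_range_mul_prod_Ico _ hj
        rw [hminor j (by omega),
          Finset.prod_congr rfl fun k hk => one_sub_prefixWeight_succ_self hT hM hA hu
            ((Finset.mem_Ico.mp hk).2.trans_le (by omega)),
          show D j (m + 1) = descWeight T U (u.take j) u by simp only [D, prefixWeight, htop]]
        rw [div_eq_iff (hQ_pos m (by omega)).ne', ← hQ]
        ring
    _ = _ := by rw [hm]

theorem hInv_pos (hT : IsTree T) (hM : IsTransMatrix T U) (hA : IsAUD T U)
    (hI : IrreducibleOn T U) {u : Word} (hu : u ∈ T) : 0 < hInv T U u := by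
  induction hlen : u.length using Nat.strong_induction_on generalizing u with
  | _ n ih =>
  rcases eq_or_ne u [] with rfl | hne
  · simp [hInv]
  have hprefix : ∀ j < u.length, 0 < hInv T U (u.take j) := fun j hj =>
    ih j (hlen ▸ hj) (take_mem_of_isTree hT hu j) (List.length_take_of_le hj.le)
  obtain ⟨j₀, hj₀, hpos⟩ := exists_descWeight_take_pos hT hM hA hI hu hne
  have hsum : 0 < ∑ j ∈ Finset.range u.length,
      hInv T U (u.take j) * descWeight T U (u.take j) u :=
    Finset.sum_pos' (fun j hj => mul_nonneg (hprefix j (Finset.mem_range.mp hj)).le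
        (descWeight_nonneg hM (take_mem_of_isTree hT hu j) u))
      ⟨j₀, Finset.mem_range.mpr hj₀, mul_pos (hprefix j₀ hj₀) hpos⟩
  rw [← hInv_mul_U_par hT hM hA hI hu hne] at hsum
  exact pos_of_mul_pos_left hsum (U_par_pos hT hA hI hu hne).le

theorem hInv_eq_sum_take_mul_descWeight (hT : IsTree T) (hM : IsTransMatrix T U) (hA : IsAUD T U)
    (hI : IrreducibleOn T U) {u : Word} (hu : u ∈ T) :
    hInv T U u = ∑ j ∈ Finset.range (u.length + 1),
      hInv T U (u.take j) * descWeight T U (u.take j) u := by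
  rw [Finset.sum_range_succ, List.take_length]
  rcases eq_or_ne u [] with rfl | hne
  · simp [descWeight_nil hM hT.1]
  · rw [← hInv_mul_U_par hT hM hA hI hu hne, ← mul_add,
      U_par_add_descWeight_self hT hM hA hu hne, mul_one]

theorem hInv_eq_sum_ancestors_add_sum_children (hT : IsTree T) (hM : IsTransMatrix T U)
    (hA : IsAUD T U) (hI : IrreducibleOn T U) {u : Word} (hu : u ∈ T) :
    hInv T U u = ∑ j ∈ Finset.range (u.length + 1), hInv T U (u.take j) * U (u.take j) u
      + ∑ i ∈ (hT.2.2 u hu).toFinset, hInv T U (u ++ [i]) * U (u ++ [i]) u := by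
  have hchild : ∀ i ∈ (hT.2.2 u hu).toFinset, hInv T U (u ++ [i]) * U (u ++ [i]) u
      = ∑ j ∈ Finset.range (u.length + 1),
          hInv T U (u.take j) * descWeight T U (u.take j) (u ++ [i]) := fun i hi => by
    have hc : u ++ [i] ∈ T := by simpa using hi
    have h := hInv_mul_U_par hT hM hA hI hc (by simp)
    simp only [par, List.dropLast_concat, List.length_append, List.length_singleton] at h
    rw [h]
    exact Finset.sum_congr rfl fun j hj => by
      rw [List.take_append_of_le_length (Nat.lt_succ_iff.mp (Finset.mem_range.mp hj))]
  rw [Finset.sum_congr rfl hchild, Finset.sum_comm, ← Finset.sum_add_distrib,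
    hInv_eq_sum_take_mul_descWeight hT hM hA hI hu]
  refine Finset.sum_congr rfl fun j _ => ?_
  rw [descWeight_eq_add_sum_children hT hM (take_mem_of_isTree hT hu j) hu, mul_add,
    Finset.mul_sum]

end HInvariant

/-- An AUD chain enters `u` only from an ancestor of `u` or from a child of `u`. -/
theorem tsum_mul_U_eq_sum_ancestors_add_sum_children {T : Set Word} {U : Word → Word → ℝ}
    (hT : IsTree T) (hM : IsTransMatrix T U) (hA : IsAUD T U) {u : Word} (hu : u ∈ T)
    (g : Word → ℝ) :
    ∑' v : T, g v * U v u = ∑ j ∈ Finset.range (u.length + 1), g (u.take j) * U (u.take j) u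
      + ∑ i ∈ (hT.2.2 u hu).toFinset, g (u ++ [i]) * U (u ++ [i]) u := by
  set F : Word → ℝ := fun v => g v * U v u
  set ancestors := (Finset.range (u.length + 1)).image u.take
  set kids := (hT.2.2 u hu).toFinset.image (u ++ [·])
  have hsupp : ∀ w ∉ ancestors ∪ kids, T.indicator F w = 0 := by
    intro w hw
    by_cases hwT : w ∈ T
    swap
    · exact Set.indicator_of_notMem hwT F
    rw [Set.indicator_of_mem hwT]
    suffices U w u = 0 by simp [F, this]
    refine U_eq_zero_of_ne_par_of_notMem_desc hM hA hwT hu (fun hpar => hw ?_) fun hdesc => hw ?_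
    · rcases eq_or_ne w [] with rfl | hne
      · exact Finset.mem_union_left _ (Finset.mem_image.mpr ⟨0, by simp, by simp [hpar, par]⟩)
      · have hw_eq : u ++ [w.getLast hne] = w := by rw [hpar, par, List.dropLast_append_getLast]
        refine Finset.mem_union_right _ (Finset.mem_image.mpr ⟨w.getLast hne, ?_, hw_eq⟩)
        simpa [hw_eq] using hwT
    · refine Finset.mem_union_left _ (Finset.mem_image.mpr ⟨w.length, ?_, ?_⟩)
      · simpa [Nat.lt_succ_iff] using hdesc.2.length_le
      · exact (List.prefix_iff_eq_take.mp hdesc.2).symm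
  have hdisj : Disjoint ancestors kids := Finset.disjoint_left.mpr fun w hwa hwk => by
    obtain ⟨j, hj, rfl⟩ := Finset.mem_image.mp hwa
    obtain ⟨i, -, hi⟩ := Finset.mem_image.mp hwk
    have hlen := congrArg List.length hi
    rw [List.length_append, List.length_singleton, List.length_take] at hlen
    have := Finset.mem_range.mp hj
    omega
  have hanc : Set.InjOn u.take (Finset.range (u.length + 1)) := fun a ha b hb hab => by
    simpa [Nat.lt_succ_iff.mp (Finset.mem_range.mp ha), Nat.lt_succ_iff.mp (Finset.mem_range.mp hb)]
      using congrArg List.length hab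
  rw [tsum_subtype T F, tsum_eq_sum hsupp, Finset.sum_union hdisj,
    Finset.sum_image hanc, Finset.sum_image fun a _ b _ h => by simpa using h]
  congr 1
  · exact Finset.sum_congr rfl fun j _ => Set.indicator_of_mem (take_mem_of_isTree hT hu j) F
  · exact Finset.sum_congr rfl fun i hi => Set.indicator_of_mem (by simpa using hi) F

theorem hInv_invariant (T : Set Word) (hT : IsTree T) (U : Word → Word → ℝ)
    (hM : IsTransMatrix T U) (hA : IsAUD T U) (hI : IrreducibleOn T U) :
    ∀ u ∈ T, 0 < hInv T U u ∧
      hInv T U u = ∑' v : T, hInv T U (v : Word) * U (v : Word) u := by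
  intro u hu
  refine ⟨hInv_pos hT hM hA hI hu, ?_⟩
  rw [tsum_mul_U_eq_sum_ancestors_add_sum_children hT hM hA hu,
    ← hInv_eq_sum_ancestors_add_sum_children hT hM hA hI hu]
end

section
/- Let U be an irreducible AUD transition matrix on an infinite rooted locally finite tree T, let i be a child of the root ∅, and let h ≥ 2 be an integer. Let T_{i,<h} = {u ∈ T_i : |u| < h} (a finite set), let U_{[i,<h]} denote the square matrix (U(u,v))_{u,v ∈ T_{i,<h}}, and let U_{[i,<h]}^{(i)} denote the same matrix with the row and column of index i deleted. Then det(Id − U_{[i,<h]}) ≠ 0, and q_h(i) = ( det(Id − U_{[i,<h]}^{(i)}) / det(Id − U_{[i,<h]}) ) · U(i,∅), where q_h(i) is the sum of W(γ) over all finite paths γ = (x_0 = i, x_1, …, x_n = ∅) with n ≥ 1 such that x_k ≠ ∅ and |x_k| < h for every 0 < k < n. -/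
open scoped BigOperators ENNReal

/-!
Let `M` be `U` restricted to `T_{i,<h}`. Since `U` is almost upper-directed, a walk from `i`
can reach the root only by the step `i → ∅`, and it cannot leave `T_i` without passing through
the root; so the escape paths are `i, x₁, …, xₙ, ∅` with all `xₖ ∈ T_{i,<h}`, and
`q_h(i) = ∑ₙ Mⁿ(i,i) U(i,∅)`. The matrix `M` is substochastic and, by irreducibility, every
nonempty set of states loses mass; the maximum principle then makes `1 - M` invertible, with
`∑ₙ Mⁿ = (1 - M)⁻¹`, and Cramer's rule turns `(1 - M)⁻¹(i,i)` into the quotient of determinants.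
-/

namespace Matrix

variable {ι : Type*}

section FiniteIndex

variable [Fintype ι] [DecidableEq ι]

theorem inv_apply_self_eq_det_div {K : Type*} [Field K] (A : Matrix ι ι K) (e : ι) :
    A⁻¹ e e = (A.submatrix ((↑) : {x // x ≠ e} → ι) (↑)).det / A.det := by
  set B := A.updateRow e (Pi.single e 1)
  have hrow : ∀ x, ¬x ≠ e → ∀ y, y ≠ e → B x y = 0 := by
    rintro x hx y hy
    simp [B, not_not.mp hx, Pi.single_eq_of_ne hy]
  have : Subsingleton {x // ¬x ≠ e} :=
    ⟨fun x y => Subtype.ext ((not_not.mp x.2).trans (not_not.mp y.2).symm)⟩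
  rw [inv_def, smul_apply, adjugate_apply, twoBlockTriangular_det _ (· ≠ e) hrow,
    det_eq_elem_of_subsingleton (B.toSquareBlockProp fun x => ¬x ≠ e) ⟨e, not_not.mpr rfl⟩]
  simp only [toSquareBlockProp_def, of_apply, B, updateRow_self, Pi.single_eq_same, mul_one,
    Ring.inverse_eq_inv', smul_eq_mul, div_eq_inv_mul]
  congr 2
  ext x y
  simp [updateRow_ne x.2]

variable (M : Matrix ι ι ℝ)

theorem sum_pow_apply_le_one (h0 : ∀ a b, 0 ≤ M a b) (h1 : ∀ a, ∑ b, M a b ≤ 1) (n : ℕ) (a : ι) :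
    ∑ b, (M ^ n) a b ≤ 1 := by
  induction n generalizing a with
  | zero => simp [one_apply]
  | succ n ih =>
    calc ∑ b, (M ^ (n + 1)) a b = ∑ c, M a c * ∑ b, (M ^ n) c b := by
          simp_rw [pow_succ', mul_apply, Finset.mul_sum]
          exact Finset.sum_comm
      _ ≤ ∑ c, M a c * 1 := by gcongr with c; exacts [h0 a c, ih c]
      _ ≤ 1 := by simpa using h1 a

/-- Maximum principle: a nonzero fixed vector `v = M v` would make `|v|` maximal on a set of
states that no mass leaves. -/
theorem det_one_sub_ne_zero (h0 : ∀ a b, 0 ≤ M a b) (h1 : ∀ a, ∑ b, M a b ≤ 1)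
    (hleak : ∀ S : Set ι, S.Nonempty → ∃ a ∈ S, ∑ b, M a b < 1 ∨ ∃ b ∉ S, 0 < M a b) :
    (1 - M).det ≠ 0 := by
  intro hdet
  obtain ⟨v, hv0, hv⟩ := exists_mulVec_eq_zero_iff.mpr hdet
  have hfix : ∀ a, v a = ∑ b, M a b * v b := fun a => by
    have := congrFun hv a
    rw [sub_mulVec, one_mulVec] at this
    simpa [sub_eq_zero, mulVec, dotProduct] using this
  have : Nonempty ι := ⟨(Function.ne_iff.mp hv0).choose⟩
  obtain ⟨a₀, -, hmax⟩ := Finset.exists_max_image Finset.univ (fun a => |v a|) Finset.univ_nonempty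
  set m := |v a₀|
  have hle : ∀ b, |v b| ≤ m := fun b => hmax b (Finset.mem_univ b)
  have hm : 0 < m := by
    obtain ⟨b, hb⟩ := Function.ne_iff.mp hv0
    exact (abs_pos.mpr hb).trans_le (hle b)
  obtain ⟨a, ha, hout⟩ := hleak {a | |v a| = m} ⟨a₀, rfl⟩
  have hbound : m ≤ ∑ b, M a b * |v b| := by
    calc m = |∑ b, M a b * v b| := by rw [← hfix a]; exact ha.symm
      _ ≤ ∑ b, |M a b * v b| := Finset.abs_sum_le_sum_abs _ _
      _ = ∑ b, M a b * |v b| := by simp_rw [abs_mul, abs_of_nonneg (h0 a _)]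
  have hweak : ∀ b ∈ Finset.univ, M a b * |v b| ≤ M a b * m := fun b _ =>
    mul_le_mul_of_nonneg_left (hle b) (h0 a b)
  rcases hout with hlt | ⟨b, hb, hpos⟩
  · have := (hbound.trans (Finset.sum_le_sum hweak)).trans_eq (Finset.sum_mul ..).symm
    nlinarith
  · have hstrict : ∑ c, M a c * |v c| < ∑ c, M a c * m :=
      Finset.sum_lt_sum hweak ⟨b, Finset.mem_univ b,
        mul_lt_mul_of_pos_left (lt_of_le_of_ne (hle b) hb) hpos⟩
    have := (hbound.trans_lt hstrict).trans_eq (Finset.sum_mul ..).symm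
    nlinarith [h1 a]

theorem hasSum_pow_apply (h0 : ∀ a b, 0 ≤ M a b) (h1 : ∀ a, ∑ b, M a b ≤ 1)
    (hdet : (1 - M).det ≠ 0) (a b : ι) : HasSum (fun n => (M ^ n) a b) ((1 - M)⁻¹ a b) := by
  set A := (1 - M)⁻¹
  have hpartial : ∀ K x y,
      ∑ n ∈ Finset.range K, (M ^ n) x y = A x y - ∑ c, A x c * (M ^ K) c y := by
    intro K x y
    have : ∑ n ∈ Finset.range K, M ^ n = A - A * M ^ K := by
      calc ∑ n ∈ Finset.range K, M ^ n = A * (1 - M) * ∑ n ∈ Finset.range K, M ^ n := by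
            rw [nonsing_inv_mul _ hdet.isUnit, one_mul]
        _ = A - A * M ^ K := by rw [mul_assoc, mul_neg_geom_sum, mul_sub, mul_one]
    simpa [sum_apply, mul_apply] using congrFun (congrFun this x) y
  have hsum : ∀ x y, Summable fun n => (M ^ n) x y := by
    intro x y
    refine summable_of_sum_range_le (c := A x y + ∑ c, |A x c|) (pow_apply_nonneg h0 · x y)
      fun K => ?_
    rw [hpartial, sub_eq_add_neg, ← Finset.sum_neg_distrib]
    gcongr with c
    have hle : (M ^ K) c y ≤ 1 := (Finset.single_le_sum (fun z _ => pow_apply_nonneg h0 K c z)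
      (Finset.mem_univ y)).trans (sum_pow_apply_le_one M h0 h1 K c)
    calc -(A x c * (M ^ K) c y) ≤ |A x c| * (M ^ K) c y := by
          rw [← neg_mul]
          exact mul_le_mul_of_nonneg_right (neg_le_abs _) (pow_apply_nonneg h0 K c y)
      _ ≤ |A x c| := mul_le_of_le_one_right (abs_nonneg _) hle
  rw [hasSum_iff_tendsto_nat_of_nonneg (pow_apply_nonneg h0 · a b), funext (hpartial · a b)]
  simpa using tendsto_const_nhds.sub
    (tendsto_finsetSum _ fun c _ => (hsum c b).tendsto_atTop_zero.const_mul (A a c))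

end FiniteIndex

section Chains

variable {R : Type*} [Semiring R] (M : Matrix ι ι R) (r : ι → R)

def chainWeight : ι → List ι → R
  | a, [] => r a
  | a, b :: l => M a b * chainWeight b l

theorem chainWeight_nonneg {M : Matrix ι ι ℝ} {r : ι → ℝ} (hM : ∀ a b, 0 ≤ M a b)
    (hr : ∀ a, 0 ≤ r a) (a : ι) (l : List ι) : 0 ≤ chainWeight M r a l := by
  induction l generalizing a with
  | nil => exact hr a
  | cons b l ih => exact mul_nonneg (hM a b) (ih b)

variable [Fintype ι] [DecidableEq ι]

theorem sum_chainWeight_ofFn (n : ℕ) (a : ι) :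
    ∑ l : Fin n → ι, chainWeight M r a (List.ofFn l) = (M ^ n *ᵥ r) a := by
  induction n generalizing a with
  | zero => simp [chainWeight]
  | succ n ih =>
    rw [← (Fin.consEquiv fun _ => ι).sum_comp, Fintype.sum_prod_type, pow_succ',
      ← mulVec_mulVec]
    simp only [Fin.consEquiv_apply, List.ofFn_succ, Fin.cons_zero, Fin.cons_succ, chainWeight,
      ← Finset.mul_sum, ih]
    rfl

theorem hasSum_chainWeight {M : Matrix ι ι ℝ} {r : ι → ℝ} (hM : ∀ a b, 0 ≤ M a b)
    (hr : ∀ a, 0 ≤ r a) {a : ι} {s : ℝ} (hs : HasSum (fun n => (M ^ n *ᵥ r) a) s) :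
    HasSum (chainWeight M r a) s := by
  set g : (Σ n, Fin n → ι) → ℝ := fun p => chainWeight M r a (List.ofFn p.2)
  have hfiber : ∀ n, HasSum (fun l => g ⟨n, l⟩) ((M ^ n *ᵥ r) a) := fun n => by
    simpa [g, sum_chainWeight_ofFn] using hasSum_fintype fun l : Fin n → ι => g ⟨n, l⟩
  have hg : Summable g := by
    refine (summable_sigma_of_nonneg fun p => chainWeight_nonneg hM hr a _).mpr
      ⟨fun n => (hfiber n).summable, ?_⟩
    exact hs.summable.congr fun n => (hfiber n).tsum_eq.symm
  exact (List.equivSigmaTuple.symm.hasSum_iff).mp (hs.sigma_of_hasSum hfiber hg)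

end Chains

end Matrix

theorem List.getD_cons_append_singleton {α : Type*} (x z d : α) (l : List α) {k : ℕ}
    (hk : k < l.length) : (x :: l ++ [z]).getD (k + 1) d = l[k] := by
  rw [List.getD_eq_getElem _ _ (by simp; omega)]
  simp [List.getElem_append_left hk]

section Walks

variable {T : Set Word} {U : Word → Word → ℝ}

theorem wgt_ne_zero_iff : ∀ γ : List Word, wgt U γ ≠ 0 ↔ γ.IsChain (fun x y => U x y ≠ 0)
  | [] => by simp [wgt]
  | [_] => by simp [wgt]
  | x :: y :: rest => by
    rw [wgt, mul_ne_zero_iff, wgt_ne_zero_iff (y :: rest), List.isChain_cons_cons]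

theorem wgt_cons_map_append {p : Word → Prop} (z : Word) (a : Subtype p) (l : List (Subtype p)) :
    wgt U (a.1 :: l.map Subtype.val ++ [z]) =
      Matrix.chainWeight (Matrix.of fun a b : Subtype p => U a.1 b.1) (fun b => U b.1 z) a l := by
  induction l generalizing a with
  | nil => simp [wgt, Matrix.chainWeight]
  | cons b l ih => simp [wgt, Matrix.chainWeight, ← ih]

theorem isEscape_iff {i : Word} {b : ℕ} {γ : List Word} :
    IsEscape T i b γ ↔ ∃ mid : List Word, γ = i :: mid ++ [[]] ∧ (∀ x ∈ γ, x ∈ T) ∧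
      ∀ y ∈ mid, y ≠ [] ∧ y.length < b := by
  constructor
  · rintro ⟨hlen, hhead, hlast, hT, hint⟩
    obtain rfl | ⟨γ', z, rfl⟩ := γ.eq_nil_or_concat'
    · simp at hlen
    obtain rfl : z = [] := by simpa using hlast
    obtain _ | ⟨x, mid⟩ := γ'
    · simp at hlen
    obtain rfl : x = i := by simpa using hhead
    refine ⟨mid, rfl, hT, fun y hy => ?_⟩
    obtain ⟨k, hk, rfl⟩ := List.getElem_of_mem hy
    have := hint (k + 1) k.succ_pos (by simpa using hk)
    rwa [List.getD_cons_append_singleton _ _ _ _ hk] at this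
  · rintro ⟨mid, rfl, hT, hmid⟩
    refine ⟨by simp, rfl, List.getLast?_concat, hT, fun k hk0 hk => ?_⟩
    obtain ⟨k, rfl⟩ := Nat.exists_eq_add_one_of_ne_zero hk0.ne'
    have hk' : k < mid.length := by simpa using hk
    rw [List.getD_cons_append_singleton _ _ _ _ hk']
    exact hmid _ (List.getElem_mem hk')

end Walks

section AUD

variable {T : Set Word} {U : Word → Word → ℝ} {i : Word}

theorem IsAUD.prefix_of_pos (hA : IsAUD T U) (hi : i.length ≤ 1) {x y : Word} (hx : x ∈ T)
    (hy : y ∈ T) (hxy : 0 < U x y) (hix : i <+: x) (hy0 : y ≠ []) : i <+: y := by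
  rcases hA x hx y hy hxy with rfl | hdesc
  · exact List.prefix_of_prefix_length_le hix (List.dropLast_prefix x)
      (hi.trans (List.length_pos_of_ne_nil hy0))
  · exact hix.trans hdesc.2

theorem IsAUD.apply_nil_eq_zero (hA : IsAUD T U) (hU : ∀ u ∈ T, ∀ v ∈ T, 0 ≤ U u v)
    (hT0 : [] ∈ T) (hi : i.length = 1) {b : Word} (hb : b ∈ T) (hib : i <+: b) (hbi : b ≠ i) :
    U b [] = 0 := by
  refine (hU b hb [] hT0).eq_of_not_lt' fun hpos => ?_
  rcases hA b hb [] hT0 hpos with hpar | hdesc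
  · have : b.length - 1 = 0 := by simpa [par] using congrArg List.length hpar.symm
    exact hbi (hib.eq_of_length (by have := hib.length_le; omega)).symm
  · obtain rfl := List.prefix_nil.mp hdesc.2
    simp [List.prefix_nil.mp hib] at hi

/-- Leaving `T_i` requires passing through the root, which an escape path visits only at its
end. -/
theorem IsAUD.prefix_of_mem_escape (hA : IsAUD T U) (hU : ∀ u ∈ T, ∀ v ∈ T, 0 ≤ U u v)
    (hi : i.length ≤ 1) {mid : List Word}
    (hT : ∀ x ∈ i :: mid ++ [[]], x ∈ T) (hmid : ∀ y ∈ mid, y ≠ [])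
    (hw : wgt U (i :: mid ++ [[]]) ≠ 0) : ∀ y ∈ mid, i <+: y := by
  have hchain : (i :: mid).IsChain fun x y => x ∈ T ∧ y ∈ T ∧ y ≠ [] ∧ U x y ≠ 0 :=
    ((wgt_ne_zero_iff _).mp hw).left_of_append.imp_of_mem_tail_imp fun x y hx hy hxy =>
      ⟨hT x (List.mem_append_left _ hx), hT y (List.mem_append_left _ (.tail _ hy)),
        hmid y hy, hxy⟩
  refine hchain.cons_induction _ _ ?_ List.prefix_rfl
  rintro x y ⟨hx, hy, hy0, hxy⟩ hix
  exact hA.prefix_of_pos hi hx hy ((hU x hx y hy).lt_of_ne' hxy) hix hy0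

end AUD

theorem IsTransMatrix.sum_le_one {T : Set Word} {U : Word → Word → ℝ} (hM : IsTransMatrix T U)
    {u : Word} (hu : u ∈ T) {s : Finset Word} (hs : ∀ v ∈ s, v ∈ T) : ∑ v ∈ s, U u v ≤ 1 := by
  classical
  rw [← Finset.sum_subtype_of_mem _ hs]
  exact sum_le_hasSum _ (fun v _ => hM.1 u hu v v.2) (hM.2 u hu)

abbrev TruncSubtree (T : Set Word) (i : Word) (h : ℕ) : Type :=
  {u : Word // u ∈ T ∧ i <+: u ∧ u.length < h}

section TruncSubtree

variable {T : Set Word} {U : Word → Word → ℝ} {i : Word} {h : ℕ}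

theorem qval_eq_tsum_chainWeight (hM : IsTransMatrix T U) (hA : IsAUD T U) (hT0 : [] ∈ T)
    (hi : i.length = 1) (hiT : i ∈ T) (hih : i.length < h) :
    qval T U i h = ∑' l : List (TruncSubtree T i h),
      Matrix.chainWeight (Matrix.of fun a b : TruncSubtree T i h => U a.1 b.1) (fun b => U b.1 [])
        ⟨i, hiT, List.prefix_rfl, hih⟩ l := by
  have hi0 : i ≠ [] := List.ne_nil_of_length_pos (by omega)
  let g (l : List (TruncSubtree T i h)) : {γ // IsEscape T i h γ} :=
    ⟨i :: l.map Subtype.val ++ [[]], isEscape_iff.mpr ⟨_, rfl,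
      by simp +contextual [hiT, hT0, or_imp],
      fun y hy => by
        obtain ⟨b, -, rfl⟩ := List.mem_map.mp hy
        exact ⟨fun h0 => hi0 (List.prefix_nil.mp (h0 ▸ b.2.2.1)), b.2.2.2⟩⟩⟩
  have hg : Function.Injective g := fun l₁ l₂ h12 =>
    List.map_injective_iff.mpr Subtype.val_injective
      (List.append_cancel_right (List.cons.inj (congrArg Subtype.val h12)).2)
  have hsupp : Function.support (fun γ : {γ // IsEscape T i h γ} => wgt U γ.1) ⊆ Set.range g := by
    rintro ⟨γ, hγ⟩ hw
    obtain ⟨mid, rfl, hT, hmid⟩ := isEscape_iff.mp hγ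
    have hsub := hA.prefix_of_mem_escape hM.1 hi.le hT (fun y hy => (hmid y hy).1) hw
    lift mid to List (TruncSubtree T i h) using fun y hy =>
      ⟨hT y (by simp [hy]), hsub y hy, (hmid y hy).2⟩
    exact ⟨mid, rfl⟩
  rw [qval, ← hg.tsum_eq hsupp]
  exact tsum_congr fun l => wgt_cons_map_append [] ⟨i, hiT, List.prefix_rfl, hih⟩ l

theorem IsAUD.apply_nil_truncSubtree (hA : IsAUD T U) (hU : ∀ u ∈ T, ∀ v ∈ T, 0 ≤ U u v)
    (hT0 : [] ∈ T) (hi : i.length = 1) (hiT : i ∈ T) (hih : i.length < h) :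
    (fun b : TruncSubtree T i h => U b.1 []) =
      Pi.single ⟨i, hiT, List.prefix_rfl, hih⟩ (U i []) := by
  funext b
  by_cases hb : b = ⟨i, hiT, List.prefix_rfl, hih⟩
  · simp [hb]
  · rw [Pi.single_eq_of_ne hb]
    exact hA.apply_nil_eq_zero hU hT0 hi b.2.1 b.2.2.1 fun hbi => hb (Subtype.ext hbi)

variable [Fintype (TruncSubtree T i h)]

theorem IsTransMatrix.sum_truncSubtree_le_one (hM : IsTransMatrix T U) (a : TruncSubtree T i h) :
    ∑ b : TruncSubtree T i h, U a.1 b.1 ≤ 1 := by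
  simpa using hM.sum_le_one a.2.1
    (s := Finset.univ.map (Function.Embedding.subtype fun u => u ∈ T ∧ i <+: u ∧ u.length < h))
    (by simp +contextual)

theorem IsTransMatrix.sum_truncSubtree_add_le_one (hM : IsTransMatrix T U)
    (a : TruncSubtree T i h) {t : Word} (ht : t ∈ T) (hti : ¬(i <+: t ∧ t.length < h)) :
    ∑ b : TruncSubtree T i h, U a.1 b.1 + U a.1 t ≤ 1 := by
  set s := Finset.univ.map (Function.Embedding.subtype fun u => u ∈ T ∧ i <+: u ∧ u.length < h)
  have hts : t ∉ s := by simpa [s] using fun _ => hti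
  have := hM.sum_le_one a.2.1 (s := insert t s) (by simp +contextual [s, ht])
  rwa [Finset.sum_insert hts, Finset.sum_map, add_comm] at this

/-- Following an irreducible path from a state of `S` to the root, the first step leaving `S`
either leaves `T_{i,<h}`, so that row loses mass, or stays inside and leaves `S`. -/
theorem IrreducibleOn.exists_leak (hM : IsTransMatrix T U) (hI : IrreducibleOn T U)
    (hT0 : [] ∈ T) (hi0 : i ≠ []) (S : Set (TruncSubtree T i h)) (hS : S.Nonempty) :
    ∃ a ∈ S, ∑ b : TruncSubtree T i h, U a.1 b.1 < 1 ∨ ∃ b ∉ S, 0 < U a.1 b.1 := by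
  by_contra! hclosed
  obtain ⟨a₀, ha₀⟩ := hS
  obtain ⟨n, x, hx0, hxn, hxT, hpos⟩ := hI a₀.1 a₀.2.1 [] hT0
  have hreach : ∀ k ≤ n, ∃ a ∈ S, a.1 = x k := by
    intro k hk
    induction k with
    | zero => exact ⟨a₀, ha₀, hx0.symm⟩
    | succ k ih =>
      obtain ⟨a, ha, hak⟩ := ih (by omega)
      have hstep : 0 < U a.1 (x (k + 1)) := hak ▸ hpos k (by omega)
      by_cases hb : i <+: x (k + 1) ∧ (x (k + 1)).length < h
      · refine ⟨⟨x (k + 1), hxT _ hk, hb⟩, ?_, rfl⟩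
        by_contra hbS
        exact ((hclosed a ha).2 _ hbS).not_gt hstep
      · linarith [(hclosed a ha).1, hM.sum_truncSubtree_add_le_one a (hxT _ hk) hb]
  obtain ⟨a, -, ha⟩ := hreach n le_rfl
  exact hi0 (List.prefix_nil.mp (hxn ▸ ha ▸ a.2.2.1))

end TruncSubtree

theorem qval_det_formula_general (T : Set Word) (hT : IsTree T)
    (U : Word → Word → ℝ) (hM : IsTransMatrix T U) (hA : IsAUD T U)
    (hI : IrreducibleOn T U) (i : Word) (hi : i ∈ children T ([] : Word))
    (h : ℕ) (hh : 2 ≤ h)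
    [Fintype {u : Word // u ∈ T ∧ i <+: u ∧ u.length < h}] :
    Matrix.det (1 - Matrix.of (fun a b : {u : Word // u ∈ T ∧ i <+: u ∧ u.length < h} =>
        U a.1 b.1)) ≠ 0 ∧
    qval T U i h =
      Matrix.det (1 - Matrix.of
          (fun a b : {x : {u : Word // u ∈ T ∧ i <+: u ∧ u.length < h} // x.1 ≠ i} =>
            U a.1.1 b.1.1)) /
        Matrix.det (1 - Matrix.of
          (fun a b : {u : Word // u ∈ T ∧ i <+: u ∧ u.length < h} => U a.1 b.1)) *
        U i [] := by
  obtain ⟨hiT, c, hic⟩ := hi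
  have hi1 : i.length = 1 := by simp [hic]
  have hih : i.length < h := by omega
  set M := Matrix.of fun a b : TruncSubtree T i h => U a.1 b.1
  set e : TruncSubtree T i h := ⟨i, hiT, List.prefix_rfl, hih⟩
  have hM0 : ∀ a b, 0 ≤ M a b := fun a b => hM.1 _ a.2.1 _ b.2.1
  have hM1 : ∀ a, ∑ b, M a b ≤ 1 := hM.sum_truncSubtree_le_one
  have hdet : (1 - M).det ≠ 0 :=
    M.det_one_sub_ne_zero hM0 hM1 (hI.exists_leak hM hT.1 (by simp [hic]))
  have hsum : HasSum (fun n => (M ^ n).mulVec (fun b => U b.1 []) e) ((1 - M)⁻¹ e e * U i []) := by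
    simpa [hA.apply_nil_truncSubtree hM.1 hT.1 hi1 hiT hih, Matrix.mulVec_single] using
      (M.hasSum_pow_apply hM0 hM1 hdet e e).mul_right (U i [])
  have hminor : ((1 - M).submatrix ((↑) : {x // x ≠ e} → _) (↑)).det =
      (1 - Matrix.of fun a b : {x : TruncSubtree T i h // x.1 ≠ i} => U a.1.1 b.1.1).det := by
    let σ : {x : TruncSubtree T i h // x.1 ≠ i} ≃ {x // x ≠ e} :=
      Equiv.subtypeEquivRight fun x => (Subtype.ext_iff (a2 := e)).not.symm
    rw [← Matrix.det_submatrix_equiv_self σ]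
    congr 1
    ext a b
    simp [σ, M, Matrix.one_apply, Subtype.ext_iff]
  refine ⟨hdet, ?_⟩
  rw [qval_eq_tsum_chainWeight hM hA hT.1 hi1 hiT hih,
    (Matrix.hasSum_chainWeight hM0 (fun b => hM.1 _ b.2.1 _ hT.1) hsum).tsum_eq,
    Matrix.inv_apply_self_eq_det_div, hminor]

theorem qval_det_formula (T : Set Word) (hT : IsTree T) (hinf : T.Infinite)
    (U : Word → Word → ℝ) (hM : IsTransMatrix T U) (hA : IsAUD T U)
    (hI : IrreducibleOn T U) (i : Word) (hi : i ∈ children T ([] : Word))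
    (h : ℕ) (hh : 2 ≤ h)
    [Fintype {u : Word // u ∈ T ∧ i <+: u ∧ u.length < h}] :
    Matrix.det (1 - Matrix.of (fun a b : {u : Word // u ∈ T ∧ i <+: u ∧ u.length < h} =>
        U a.1 b.1)) ≠ 0 ∧
    qval T U i h =
      Matrix.det (1 - Matrix.of
          (fun a b : {x : {u : Word // u ∈ T ∧ i <+: u ∧ u.length < h} // x.1 ≠ i} =>
            U a.1.1 b.1.1)) /
        Matrix.det (1 - Matrix.of
          (fun a b : {u : Word // u ∈ T ∧ i <+: u ∧ u.length < h} => U a.1 b.1)) *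
        U i [] :=
  qval_det_formula_general T hT U hM hA hI i hi h hh
end

section
/- Let U be an irreducible AUD transition matrix on an infinite rooted locally finite tree T. Then for every end 𝕡 of T, the projected transition matrix U^𝕡 is an irreducible AUD transition matrix on the tree T^𝕡. Moreover, if there exists an end 𝕡 such that U^𝕡 is transient (i.e. not recurrent, where recurrence of U^𝕡 is defined via first-return loops at the root ∅ of T^𝕡), then U is transient. -/
open scoped BigOperators ENNReal

/-!
A node `w` off `T^𝕡` sits in an infinite subtree branching off `𝕡`, and `℘_𝕡 w` is the deepest
node of `𝕡` above it. An AUD step out of `w` goes to its parent or to a descendant, and neither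
changes `℘_𝕡`. Grouping the entries of each row of `U` by `℘_𝕡` therefore gives a stochastic AUD
matrix, and projecting a positive path of `U` gives a positive path of `U^𝕡`.

For recurrence, keeping only its visits to `T^𝕡` turns a first-return loop of `U` into one of
`U^𝕡`. Between two consecutive visits `v, v'` the walk makes an excursion through `T \ T^𝕡`.
The excursion can only end at `v'` if its first node projects to `v'`. After that first step it
is a first passage to `T^𝕡`, so its total weight is at most `1`. So the loops of `U` above a
given loop of `U^𝕡` weigh at most as much as it does. Hence the loop mass of `U`, which is `1` if
`U` is recurrent, is at most that of `U^𝕡`, and the latter is at most `1`.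
-/

theorem List.IsPrefix.antisymm {α : Type*} {l₁ l₂ : List α} (h : l₁ <+: l₂) (h' : l₂ <+: l₁) :
    l₁ = l₂ :=
  h.eq_of_length (le_antisymm h.length_le h'.length_le)

theorem List.IsPrefix.prefix_dropLast_of_ne {α : Type*} {v u : List α} (h : v <+: u)
    (hne : v ≠ u) : v <+: u.dropLast := by
  obtain ⟨t, rfl⟩ := h
  rcases List.eq_nil_or_concat t with rfl | ⟨t', x, rfl⟩
  · simp at hne
  · rw [List.concat_eq_append, ← List.append_assoc, List.dropLast_concat]
    exact List.prefix_append _ _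

section EndTree

variable {T : Set Word} {p : ℕ → Word}

namespace IsEnd

theorem apply_mem (hT : IsTree T) (hp : IsEnd T p) (k : ℕ) : p k ∈ T := by
  cases k with
  | zero => rw [hp.1]; exact hT.1
  | succ n => exact (hp.2 n).1

theorem length_apply (hp : IsEnd T p) (k : ℕ) : (p k).length = k := by
  induction k with
  | zero => rw [hp.1]; rfl
  | succ n ih =>
    obtain ⟨_, i, hi⟩ := hp.2 n
    rw [hi, List.length_append, ih, List.length_singleton]

theorem prefix_of_le (hp : IsEnd T p) {j k : ℕ} (h : j ≤ k) : p j <+: p k := by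
  induction k, h using Nat.le_induction with
  | base => exact List.prefix_refl _
  | succ n _ ih =>
    obtain ⟨_, i, hi⟩ := hp.2 n
    exact ih.trans (hi ▸ List.prefix_append _ _)

theorem mem_range_of_prefix (hp : IsEnd T p) {v w : Word} (h : v <+: w)
    (hw : w ∈ Set.range p) : v ∈ Set.range p := by
  obtain ⟨k, rfl⟩ := hw
  have hlen : v.length ≤ k := hp.length_apply k ▸ h.length_le
  refine ⟨v.length, ?_⟩
  exact (List.prefix_of_prefix_length_le (hp.prefix_of_le hlen) h
    (by rw [hp.length_apply])).eq_of_length (by rw [hp.length_apply])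

theorem nil_mem_endTree (hp : IsEnd T p) : ([] : Word) ∈ endTree T p :=
  Or.inl ⟨0, hp.1⟩

end IsEnd

theorem range_subset_endTree : Set.range p ⊆ endTree T p := Set.subset_union_left

theorem endTree_subset (hT : IsTree T) (hp : IsEnd T p) : endTree T p ⊆ T := by
  rintro v (⟨k, rfl⟩ | hv)
  · exact hp.apply_mem hT k
  · exact hv.1

theorem notMem_endTree_of_prefix (hp : IsEnd T p) {u w : Word} (hu : u ∈ T)
    (huS : u ∉ endTree T p) (huw : u <+: w) : w ∉ endTree T p := by
  have hur : u ∉ Set.range p := fun h => huS (range_subset_endTree h)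
  rintro (hr | ⟨_, w₁, hw₁T, hw₁w, hw₁r, hpar, hfin⟩)
  · exact hur (hp.mem_range_of_prefix huw hr)
  · rcases List.prefix_or_prefix_of_prefix huw hw₁w with huw₁ | hw₁u
    · rcases eq_or_ne u w₁ with rfl | hne
      · exact huS (Or.inr ⟨hu, u, hw₁T, List.prefix_refl _, hw₁r, hpar, hfin⟩)
      · exact hur (hp.mem_range_of_prefix (huw₁.prefix_dropLast_of_ne hne) hpar)
    · exact huS (Or.inr ⟨hu, w₁, hw₁T, hw₁u, hw₁r, hpar, hfin⟩)

theorem par_mem_endTree (hT : IsTree T) (hp : IsEnd T p) {u : Word} (hu : u ∈ endTree T p) :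
    par u ∈ endTree T p := by
  rcases hu with ⟨k, rfl⟩ | ⟨huT, w, hwT, hwu, hwr, hpar, hfin⟩
  · cases k with
    | zero => rw [hp.1]; exact hp.nil_mem_endTree
    | succ n =>
      obtain ⟨_, i, hi⟩ := hp.2 n
      exact range_subset_endTree ⟨n, by rw [hi, par, List.dropLast_concat]⟩
  · rcases eq_or_ne w u with rfl | hne
    · exact range_subset_endTree hpar
    · exact Or.inr ⟨hT.2.1 u huT _ (List.dropLast_prefix u), w, hwT,
        hwu.prefix_dropLast_of_ne hne, hwr, hpar, hfin⟩

theorem par_mem_range_of_notMem_endTree {a : Word} (ha : a ∈ T) (haS : a ∉ endTree T p)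
    (hpar : par a ∈ endTree T p) : par a ∈ Set.range p := by
  rcases hpar with hr | ⟨_, w, hwT, hwa, hwr, hwpar, hfin⟩
  · exact hr
  · exact absurd (Or.inr ⟨ha, w, hwT, hwa.trans (List.dropLast_prefix a), hwr, hwpar, hfin⟩) haS

open Classical in
noncomputable def endProj (T : Set Word) (p : ℕ → Word) (w : Word) : Word :=
  if w ∈ endTree T p then w else p (Nat.findGreatest (fun k => p k <+: w) w.length)

theorem endProj_of_mem {w : Word} (h : w ∈ endTree T p) : endProj T p w = w := if_pos h

theorem endProj_mem_range {w : Word} (h : w ∉ endTree T p) : endProj T p w ∈ Set.range p := by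
  rw [endProj, if_neg h]; exact ⟨_, rfl⟩

theorem endProj_prefix (hp : IsEnd T p) {w : Word} (h : w ∉ endTree T p) :
    endProj T p w <+: w := by
  rw [endProj, if_neg h]
  exact Nat.findGreatest_spec (P := fun k => p k <+: w) (Nat.zero_le _)
    (by rw [hp.1]; exact List.nil_prefix)

theorem prefix_endProj (hp : IsEnd T p) {w v : Word} (h : w ∉ endTree T p)
    (hv : v ∈ Set.range p) (hvw : v <+: w) : v <+: endProj T p w := by
  rw [endProj, if_neg h]
  obtain ⟨k, rfl⟩ := hv
  exact hp.prefix_of_le (Nat.le_findGreatest (hp.length_apply k ▸ hvw.length_le) hvw)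

theorem endProj_mem_endTree (w : Word) : endProj T p w ∈ endTree T p := by
  by_cases h : w ∈ endTree T p
  · rwa [endProj_of_mem h]
  · exact range_subset_endTree (endProj_mem_range h)

theorem projTo_iff (hp : IsEnd T p) {w v : Word} : projTo T p w v ↔ v = endProj T p w := by
  constructor
  · rintro (⟨hw, rfl⟩ | ⟨hw, hv, hvw, hmax⟩)
    · exact (endProj_of_mem hw).symm
    · exact (prefix_endProj hp hw hv hvw).antisymm
        (hmax _ (endProj_mem_range hw) (endProj_prefix hp hw))
  · rintro rfl
    by_cases hw : w ∈ endTree T p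
    · exact Or.inl ⟨hw, endProj_of_mem hw⟩
    · exact Or.inr ⟨hw, endProj_mem_range hw, endProj_prefix hp hw,
        fun v hv hvw => prefix_endProj hp hw hv hvw⟩

theorem endProj_eq_of_step (hp : IsEnd T p) {a b : Word} (ha : a ∈ T)
    (haS : a ∉ endTree T p) (hab : b = par a ∨ b ∈ desc T a) :
    endProj T p b = endProj T p a := by
  have har : a ∉ Set.range p := fun h => haS (range_subset_endTree h)
  have hne : endProj T p a ≠ a := fun h => har (h ▸ endProj_mem_range haS)
  have hpa : endProj T p a <+: par a := (endProj_prefix hp haS).prefix_dropLast_of_ne hne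
  rcases hab with rfl | ⟨_, hab⟩
  · by_cases hbS : par a ∈ endTree T p
    · rw [endProj_of_mem hbS]
      exact (prefix_endProj hp haS (par_mem_range_of_notMem_endTree ha haS hbS)
        (List.dropLast_prefix a)).antisymm hpa
    · exact (prefix_endProj hp haS (endProj_mem_range hbS)
        ((endProj_prefix hp hbS).trans (List.dropLast_prefix a))).antisymm
        (prefix_endProj hp hbS (endProj_mem_range haS) hpa)
  · have hbS : b ∉ endTree T p := notMem_endTree_of_prefix hp ha haS hab
    have hba : endProj T p b <+: a := by
      rcases List.prefix_or_prefix_of_prefix (endProj_prefix hp hbS) hab with h | h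
      · exact h
      · exact absurd (hp.mem_range_of_prefix h (endProj_mem_range hbS)) har
    exact (prefix_endProj hp haS (endProj_mem_range hbS) hba).antisymm
      (prefix_endProj hp hbS (endProj_mem_range haS) ((endProj_prefix hp haS).trans hab))

end EndTree

section Projection

variable {T : Set Word} {p : ℕ → Word} {U : Word → Word → ℝ}

theorem summable_fiber (hM : IsTransMatrix T U) {u : Word} (hu : u ∈ T) (v : Word) :
    Summable fun w : {w : Word // w ∈ T ∧ projTo T p w v} => U u w :=
  (hM.2 u hu).summable.comp_injective (i := fun w => (⟨w.1, w.2.1⟩ : T))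
    fun _ _ h => Subtype.ext (Subtype.mk_eq_mk.mp h)

theorem projMat_nonneg (hM : IsTransMatrix T U) {u : Word} (hu : u ∈ T) (v : Word) :
    0 ≤ projMat T p U u v :=
  tsum_nonneg fun w => hM.1 u hu w.1 w.2.1

theorem hasSum_projMat (hp : IsEnd T p) (hM : IsTransMatrix T U) {u : Word} (hu : u ∈ T) :
    HasSum (fun v : endTree T p => projMat T p U u v) 1 := by
  have h := (hM.2 u hu).tsum_fiberwise
    fun w : T => (⟨endProj T p w, endProj_mem_endTree w⟩ : endTree T p)
  refine h.congr_fun fun v => ?_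
  let e : {w : Word // w ∈ T ∧ projTo T p w v} ≃
      (fun w : T => (⟨endProj T p w, endProj_mem_endTree w⟩ : endTree T p)) ⁻¹' {v} :=
    { toFun w := ⟨⟨w.1, w.2.1⟩, Subtype.ext ((projTo_iff hp).1 w.2.2).symm⟩
      invFun b := ⟨b.1.1, b.1.2, (projTo_iff hp).2 (congrArg Subtype.val b.2).symm⟩
      left_inv _ := rfl
      right_inv _ := rfl }
  exact e.tsum_eq fun b => U u b.1.1

theorem isTransMatrix_projMat (hT : IsTree T) (hp : IsEnd T p) (hM : IsTransMatrix T U) :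
    IsTransMatrix (endTree T p) (projMat T p U) :=
  ⟨fun _ hu v _ => projMat_nonneg hM (endTree_subset hT hp hu) v,
    fun _ hu => hasSum_projMat hp hM (endTree_subset hT hp hu)⟩

theorem exists_pos_of_projMat_pos (hM : IsTransMatrix T U) {u v : Word} (hu : u ∈ T)
    (h : 0 < projMat T p U u v) : ∃ w ∈ T, projTo T p w v ∧ 0 < U u w := by
  by_contra! hc
  refine h.ne' ((tsum_congr fun w => ?_).trans tsum_zero)
  exact le_antisymm (hc w w.2.1 w.2.2) (hM.1 u hu w w.2.1)

theorem projMat_pos (hp : IsEnd T p) (hM : IsTransMatrix T U) {a b : Word} (ha : a ∈ T)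
    (hb : b ∈ T) (hab : 0 < U a b) : 0 < projMat T p U a (endProj T p b) :=
  (summable_fiber hM ha _).tsum_pos (fun w => hM.1 a ha w.1 w.2.1)
    ⟨b, hb, (projTo_iff hp).2 rfl⟩ hab

theorem isAUD_projMat (hT : IsTree T) (hp : IsEnd T p) (hM : IsTransMatrix T U)
    (hA : IsAUD T U) : IsAUD (endTree T p) (projMat T p U) := by
  intro u hu v hv hpos
  have huT : u ∈ T := endTree_subset hT hp hu
  obtain ⟨w, hwT, hwv, hw⟩ := exists_pos_of_projMat_pos hM huT hpos
  rcases hA u huT w hwT hw with rfl | ⟨_, huw⟩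
  · rcases hwv with ⟨_, rfl⟩ | ⟨hwS, _⟩
    · exact Or.inl rfl
    · exact absurd (par_mem_endTree hT hp hu) hwS
  · rcases hwv with ⟨hwS, rfl⟩ | ⟨hwS, hvr, -, hmax⟩
    · exact Or.inr ⟨hwS, huw⟩
    · have hur : u ∈ Set.range p := by
        rcases hu with hur | ⟨-, w₁, hw₁T, hw₁u, hw₁r, hpar, hfin⟩
        · exact hur
        · exact absurd (Or.inr ⟨hwT, w₁, hw₁T, hw₁u.trans huw, hw₁r, hpar, hfin⟩) hwS
      exact Or.inr ⟨range_subset_endTree hvr, hmax u hur huw⟩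

theorem IrreducibleOn.of_reflTransGen {C : Set Word} {M : Word → Word → ℝ}
    (h : ∀ u ∈ C, ∀ v ∈ C, Relation.ReflTransGen (fun a b => b ∈ C ∧ 0 < M a b) u v) :
    IrreducibleOn C M := by
  intro u hu v hv
  have huv := h u hu v hv
  clear hv
  induction huv with
  | refl => exact ⟨0, fun _ => u, rfl, rfl, fun _ _ => hu, fun _ h => absurd h (Nat.not_lt_zero _)⟩
  | @tail b c _ hbc ih =>
    obtain ⟨n, x, hx0, hxn, hxC, hx⟩ := ih
    refine ⟨n + 1, fun k => if k ≤ n then x k else c, by simp [hx0], by simp, fun k hk => ?_,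
      fun k hk => ?_⟩
    · dsimp only
      split_ifs
      · exact hxC k ‹_›
      · exact hbc.1
    · rcases Nat.lt_succ_iff_lt_or_eq.1 hk with hk | rfl
      · simpa [hk.le, Nat.succ_le_of_lt hk] using hx k hk
      · simpa [hxn] using hbc.2

theorem irreducibleOn_projMat (hT : IsTree T) (hp : IsEnd T p) (hM : IsTransMatrix T U)
    (hA : IsAUD T U) (hI : IrreducibleOn T U) :
    IrreducibleOn (endTree T p) (projMat T p U) := by
  refine IrreducibleOn.of_reflTransGen fun u hu v hv => ?_
  obtain ⟨n, x, rfl, rfl, hxT, hx⟩ := hI u (endTree_subset hT hp hu) v (endTree_subset hT hp hv)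
  rw [← endProj_of_mem hu, ← endProj_of_mem hv]
  suffices ∀ k ≤ n, Relation.ReflTransGen (fun a b => b ∈ endTree T p ∧ 0 < projMat T p U a b)
      (endProj T p (x 0)) (endProj T p (x k)) from this n le_rfl
  intro k hk
  induction k with
  | zero => exact .refl
  | succ j ih =>
    refine (ih (by omega)).trans ?_
    by_cases hS : x j ∈ endTree T p
    · rw [endProj_of_mem hS]
      exact .single ⟨endProj_mem_endTree _,
        projMat_pos hp hM (hxT j (by omega)) (hxT (j + 1) hk) (hx j hk)⟩
    · rw [endProj_eq_of_step hp (hxT j (by omega)) hS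
        (hA _ (hxT j (by omega)) _ (hxT (j + 1) hk) (hx j hk))]

end Projection

section PathWeight

noncomputable def ofRealKernel (M : Word → Word → ℝ) (a b : Word) : ℝ≥0∞ :=
  ENNReal.ofReal (M a b)

/-- `wgt` for `ℝ≥0∞`-valued kernels, where series need no summability side conditions. -/
noncomputable def pathWeight (K : Word → Word → ℝ≥0∞) : List Word → ℝ≥0∞
  | x :: y :: rest => K x y * pathWeight K (y :: rest)
  | _ => 1

variable {K : Word → Word → ℝ≥0∞}

@[simp] theorem pathWeight_nil : pathWeight K [] = 1 := rfl

@[simp] theorem pathWeight_singleton (x : Word) : pathWeight K [x] = 1 := rfl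

@[simp] theorem pathWeight_cons_cons (x y : Word) (l : List Word) :
    pathWeight K (x :: y :: l) = K x y * pathWeight K (y :: l) := rfl

theorem pathWeight_cons_append_cons (a v : Word) (ob t : List Word) :
    pathWeight K (a :: (ob ++ v :: t)) =
      pathWeight K (a :: (ob ++ [v])) * pathWeight K (v :: t) := by
  induction ob generalizing a with
  | nil => simp
  | cons b ob ih => simp only [List.cons_append, pathWeight_cons_cons, ih, mul_assoc]

theorem ofReal_wgt {C : Set Word} {M : Word → Word → ℝ} (hM : ∀ a ∈ C, ∀ b ∈ C, 0 ≤ M a b)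
    {l : List Word} (hl : ∀ x ∈ l, x ∈ C) :
    ENNReal.ofReal (wgt M l) = pathWeight (ofRealKernel M) l := by
  induction l with
  | nil => simp [wgt]
  | cons x l ih =>
    cases l with
    | nil => simp [wgt]
    | cons y l =>
      rw [wgt, pathWeight_cons_cons, ENNReal.ofReal_mul (hM x (hl x (by simp)) y (hl y (by simp))),
        ih fun z hz => hl z (List.mem_cons_of_mem _ hz), ofRealKernel]

theorem wgt_nonneg {C : Set Word} {M : Word → Word → ℝ} (hM : ∀ a ∈ C, ∀ b ∈ C, 0 ≤ M a b)
    {l : List Word} (hl : ∀ x ∈ l, x ∈ C) : 0 ≤ wgt M l := by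
  induction l with
  | nil => simp [wgt]
  | cons x l ih =>
    cases l with
    | nil => simp [wgt]
    | cons y l =>
      exact mul_nonneg (hM x (hl x (by simp)) y (hl y (by simp)))
        (ih fun z hz => hl z (List.mem_cons_of_mem _ hz))

theorem recurrent_iff {C : Set Word} {M : Word → Word → ℝ} (hM : ∀ a ∈ C, ∀ b ∈ C, 0 ≤ M a b) :
    Recurrent C M ↔ ∑' γ : {γ // IsLoop C γ}, pathWeight (ofRealKernel M) γ = 1 := by
  have hmem (γ : {γ // IsLoop C γ}) : ∀ x ∈ γ.1, x ∈ C := γ.2.2.2.2.1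
  simp_rw [← fun γ : {γ // IsLoop C γ} => ofReal_wgt hM (hmem γ)]
  rw [Recurrent, loopSum]
  constructor
  · intro h
    have hs : Summable fun γ : {γ // IsLoop C γ} => wgt M γ :=
      by_contra fun hs => one_ne_zero (h ▸ tsum_eq_zero_of_not_summable hs)
    rw [← ENNReal.ofReal_tsum_of_nonneg (fun γ => wgt_nonneg hM (hmem γ)) hs, h, ENNReal.ofReal_one]
  · intro h
    rw [← ENNReal.toReal_one, ← h, ENNReal.tsum_toReal_eq fun _ => ENNReal.ofReal_ne_top]
    exact tsum_congr fun γ => (ENNReal.toReal_ofReal (wgt_nonneg hM (hmem γ))).symm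

theorem tsum_ofRealKernel_eq_one {C : Set Word} {M : Word → Word → ℝ} (hM : IsTransMatrix C M)
    {a : Word} (ha : a ∈ C) : ∑' z : C, ofRealKernel M a z = 1 := by
  rw [← ENNReal.ofReal_one, ← (hM.2 a ha).tsum_eq,
    ENNReal.ofReal_tsum_of_nonneg (fun z : C => hM.1 a ha z z.2) (hM.2 a ha).summable]
  rfl

end PathWeight

section FirstPassage

def firstPassages (A B : Set Word) : ℕ → Word → Set (List Word)
  | 0, w => (fun z => [w, z]) '' (A ∩ B)
  | n + 1, w => ⋃ y ∈ A \ B, List.cons w '' firstPassages A B n y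

variable {A B : Set Word} {K : Word → Word → ℝ≥0∞}

theorem cons_append_mem_firstPassages {mid : List Word} {w z : Word} (hmid : ∀ x ∈ mid, x ∈ A \ B)
    (hz : z ∈ A ∩ B) : w :: (mid ++ [z]) ∈ firstPassages A B mid.length w := by
  induction mid generalizing w with
  | nil => exact ⟨z, hz, rfl⟩
  | cons y mid ih =>
    exact Set.mem_biUnion (hmid y (by simp)) ⟨_, ih fun x hx => hmid x (by simp [hx]), rfl⟩

theorem exists_eq_cons_of_mem_firstPassages {n : ℕ} {w : Word} {γ : List Word}
    (h : γ ∈ firstPassages A B n w) : ∃ t, γ = w :: t := by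
  cases n with
  | zero => obtain ⟨z, -, rfl⟩ := h; exact ⟨[z], rfl⟩
  | succ n =>
    obtain ⟨y, -, γ', -, rfl⟩ := Set.mem_iUnion₂.1 h
    exact ⟨γ', rfl⟩

theorem tsum_firstPassages_succ_le (n : ℕ) (w : Word) :
    ∑' γ : firstPassages A B (n + 1) w, pathWeight K γ ≤
      ∑' y : ↥(A \ B), K w y * ∑' γ : firstPassages A B n y, pathWeight K γ := by
  refine (ENNReal.tsum_biUnion_le_tsum _ _ _).trans (ENNReal.tsum_le_tsum fun y => ?_)
  rw [tsum_image _ List.cons_injective.injOn, ← ENNReal.tsum_mul_left]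
  refine ENNReal.tsum_le_tsum fun γ => le_of_eq ?_
  obtain ⟨t, ht⟩ := exists_eq_cons_of_mem_firstPassages γ.2
  rw [ht, pathWeight_cons_cons]

theorem sum_tsum_firstPassages_le_one (hK : ∀ a ∈ A, ∑' z : A, K a z ≤ 1) (N : ℕ) {w : Word}
    (hw : w ∈ A) : ∑ n ∈ Finset.range N, ∑' γ : firstPassages A B n w, pathWeight K γ ≤ 1 := by
  induction N generalizing w with
  | zero => simp
  | succ N ih =>
    have h0 : ∑' γ : firstPassages A B 0 w, pathWeight K γ = ∑' z : ↥(A ∩ B), K w z := by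
      rw [firstPassages,
        tsum_image _ fun _ _ _ _ h => List.head_eq_of_cons_eq (List.tail_eq_of_cons_eq h)]
      simp
    rw [Finset.sum_range_succ', h0]
    calc ∑ n ∈ Finset.range N, ∑' γ : firstPassages A B (n + 1) w, pathWeight K γ +
          ∑' z : ↥(A ∩ B), K w z
        ≤ ∑ n ∈ Finset.range N,
              ∑' y : ↥(A \ B), K w y * ∑' γ : firstPassages A B n y, pathWeight K γ +
          ∑' z : ↥(A ∩ B), K w z := by
          gcongr with n; exact tsum_firstPassages_succ_le n w
      _ = ∑' y : ↥(A \ B),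
              K w y * ∑ n ∈ Finset.range N, ∑' γ : firstPassages A B n y, pathWeight K γ +
          ∑' z : ↥(A ∩ B), K w z := by
          simp_rw [Finset.mul_sum]
          rw [Summable.tsum_finsetSum fun _ _ => ENNReal.summable]
      _ ≤ ∑' y : ↥(A \ B), K w y + ∑' z : ↥(A ∩ B), K w z := by
          gcongr with y
          exact mul_le_of_le_one_right' (ih y.2.1)
      _ = ∑' z : ↥(A \ B ∪ A ∩ B), K w z :=
          (ENNReal.summable.tsum_union_disjoint Set.disjoint_sdiff_inter ENNReal.summable).symm
      _ ≤ 1 := by rw [Set.sdiff_union_inter]; exact hK w hw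

theorem tsum_firstPassages_le_one (hK : ∀ a ∈ A, ∑' z : A, K a z ≤ 1) {w : Word} (hw : w ∈ A) :
    ∑' γ : ⋃ n, firstPassages A B n w, pathWeight K γ ≤ 1 :=
  (ENNReal.tsum_iUnion_le_tsum _ _).trans <| ENNReal.tsum_eq_iSup_nat.trans_le <|
    iSup_le fun N => sum_tsum_firstPassages_le_one hK N hw

theorem tsum_pathWeight_cons_append_le_one (hK : ∀ a ∈ A, ∑' z : A, K a z ≤ 1) {y z : Word}
    (hy : y ∈ A) (hz : z ∈ A ∩ B) :
    ∑' ob : {ob : List Word | ∀ x ∈ ob, x ∈ A \ B}, pathWeight K (y :: (ob ++ [z])) ≤ 1 := by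
  have hinj : Set.InjOn (fun ob => y :: (ob ++ [z])) {ob : List Word | ∀ x ∈ ob, x ∈ A \ B} :=
    fun _ _ _ _ h => List.append_cancel_right (List.cons_injective h)
  rw [← tsum_image (fun γ => pathWeight K γ) hinj]
  refine (ENNReal.tsum_mono_subtype _ ?_).trans (tsum_firstPassages_le_one (B := B) hK hy)
  rintro _ ⟨ob, hob, rfl⟩
  exact Set.mem_iUnion.2 ⟨_, cons_append_mem_firstPassages hob hz⟩

end FirstPassage

theorem isLoop_iff {C : Set Word} {γ : List Word} :
    IsLoop C γ ↔ ∃ mid, γ = ([] : Word) :: (mid ++ [([] : Word)]) ∧ (∀ x ∈ γ, x ∈ C) ∧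
      ∀ x ∈ mid, x ≠ ([] : Word) := by
  constructor
  · rintro ⟨h2, hh, hl, hmem, hint⟩
    obtain ⟨a, t, rfl⟩ : ∃ a t, γ = a :: t := List.exists_cons_of_length_pos (by omega)
    obtain rfl : a = [] := by simpa using hh
    have ht : t ≠ [] := by rintro rfl; simp at h2
    obtain ⟨mid, z, rfl⟩ := List.eq_nil_or_concat t |>.resolve_left ht
    obtain rfl : z = [] := by
      rw [List.concat_eq_append, ← List.cons_append, List.getLast?_concat] at hl
      exact Option.some_inj.1 hl
    refine ⟨mid, by rw [List.concat_eq_append], hmem, fun x hx => ?_⟩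
    obtain ⟨k, hk, rfl⟩ := List.mem_iff_getElem.1 hx
    have := hint (k + 1) (by omega) (by
      simp only [List.concat_eq_append, List.length_cons, List.length_append, List.length_nil]
      omega)
    rwa [List.concat_eq_append, List.getD_cons_succ, List.getD_append _ _ _ _ hk,
      List.getD_eq_getElem _ _ hk] at this
  · rintro ⟨mid, rfl, hmem, hmid⟩
    refine ⟨by simp, rfl, by rw [← List.cons_append, List.getLast?_concat], hmem, ?_⟩
    intro k hk0 hk
    obtain ⟨j, rfl⟩ : ∃ j, k = j + 1 := ⟨k - 1, by omega⟩
    have hj : j < mid.length := by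
      simp only [List.length_cons, List.length_append, List.length_nil] at hk
      omega
    rw [List.getD_cons_succ, List.getD_append _ _ _ _ hj, List.getD_eq_getElem _ _ hj]
    exact hmid _ (List.getElem_mem hj)

theorem tsum_image2_le {α β γ : Type*} (f : α → β → γ) (s : Set α) (t : Set β)
    (g : γ → ℝ≥0∞) : ∑' z : Set.image2 f s t, g z ≤ ∑' (x : s) (y : t), g (f x y) := by
  have hsurj : Function.Surjective fun xy : s × t =>
      (⟨f xy.1 xy.2, Set.mem_image2_of_mem xy.1.2 xy.2.2⟩ : Set.image2 f s t) := by
    rintro ⟨_, x, hx, y, hy, rfl⟩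
    exact ⟨(⟨x, hx⟩, ⟨y, hy⟩), rfl⟩
  exact (ENNReal.tsum_le_tsum_comp_of_surjective hsurj _).trans_eq
    (ENNReal.tsum_prod (f := fun (x : s) (y : t) => g (f x y)))

/-- The paths in `T` whose successive visits to `S` are exactly `δ`, ending at the last one. -/
def lifts (T S : Set Word) : List Word → Set (List Word)
  | [] => {[]}
  | v :: δ => Set.image2 (fun ob t => ob ++ v :: t) {ob | ∀ x ∈ ob, x ∈ T \ S} (lifts T S δ)

open Classical in
theorem mem_lifts_filter {T S : Set Word} {l : List Word} (hl : ∀ x ∈ l, x ∈ T)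
    (hlast : ∀ y ∈ l.getLast?, y ∈ S) : l ∈ lifts T S (l.filter (· ∈ S)) := by
  induction l with
  | nil => rfl
  | cons x l ih =>
    have hlast' : ∀ y ∈ l.getLast?, y ∈ S := by
      intro y hy
      cases l with
      | nil => simp at hy
      | cons => exact hlast y (by rwa [List.getLast?_cons_cons])
    have hlift := ih (fun y hy => hl y (List.mem_cons_of_mem _ hy)) hlast'
    by_cases hx : x ∈ S
    · rw [List.filter_cons_of_pos (by simpa using hx)]
      exact ⟨[], by simp, l, hlift, rfl⟩
    · rw [List.filter_cons_of_neg (by simpa using hx)]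
      have hl0 : l ≠ [] := by
        rintro rfl
        exact hx (hlast x rfl)
      cases hf : l.filter (· ∈ S) with
      | nil =>
        have hmem := List.getLast_mem hl0
        rw [List.filter_eq_nil_iff] at hf
        exact absurd (hlast' _ (List.getLast?_eq_some_getLast hl0)) (by simpa using hf _ hmem)
      | cons v δ =>
        rw [hf] at hlift
        obtain ⟨ob, hob, t, ht, rfl⟩ := hlift
        refine ⟨x :: ob, fun y hy => ?_, t, ht, rfl⟩
        rcases List.mem_cons.1 hy with rfl | hy
        · exact ⟨hl y List.mem_cons_self, hx⟩
        · exact hob y hy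

open Classical in
theorem setOf_isLoop_subset {T S : Set Word} (hS : ([] : Word) ∈ S) :
    {γ | IsLoop T γ} ⊆ ⋃ δ : {δ // IsLoop S δ}, List.cons [] '' lifts T S δ.1.tail := by
  intro γ hγ
  obtain ⟨mid, rfl, hmem, hmid⟩ := isLoop_iff.1 hγ
  have hδ : IsLoop S ([] :: (mid ++ [[]]).filter (· ∈ S)) := by
    refine isLoop_iff.2 ⟨mid.filter (· ∈ S), ?_, ?_, fun x hx => hmid x (List.mem_filter.1 hx).1⟩
    · rw [List.filter_append, List.filter_cons_of_pos (by simpa using hS), List.filter_nil]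
    · rintro x (_ | ⟨_, hx⟩)
      · exact hS
      · simpa using (List.mem_filter.1 hx).2
  refine Set.mem_iUnion.2 ⟨⟨_, hδ⟩, mid ++ [[]], ?_, rfl⟩
  refine mem_lifts_filter (fun x hx => hmem x (List.mem_cons_of_mem _ hx)) ?_
  rw [List.getLast?_concat]
  rintro y ⟨⟩
  exact hS

section Recurrence

variable {T : Set Word} {p : ℕ → Word} {U : Word → Word → ℝ}

theorem ofReal_projMat (hM : IsTransMatrix T U) {a : Word} (ha : a ∈ T) (v : Word) :
    ofRealKernel (projMat T p U) a v =
      ∑' w : {w // w ∈ T ∧ projTo T p w v}, ofRealKernel U a w :=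
  ENNReal.ofReal_tsum_of_nonneg (fun w => hM.1 a ha w w.2.1) (summable_fiber hM ha v)

theorem endProj_eq_of_pathWeight_ne_zero (hp : IsEnd T p) (hA : IsAUD T U) {v : Word}
    (hv : v ∈ T) {ob : List Word} (hob : ∀ x ∈ ob, x ∈ T \ endTree T p) {w : Word}
    (hw : w ∈ T \ endTree T p) (h : pathWeight (ofRealKernel U) (w :: (ob ++ [v])) ≠ 0) :
    endProj T p v = endProj T p w := by
  induction ob generalizing w with
  | nil =>
    simp only [List.nil_append, pathWeight_cons_cons, pathWeight_singleton, mul_one] at h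
    exact endProj_eq_of_step hp hw.1 hw.2
      (hA w hw.1 v hv (ENNReal.ofReal_pos.1 (pos_iff_ne_zero.2 h)))
  | cons b ob ih =>
    rw [List.cons_append, pathWeight_cons_cons] at h
    obtain ⟨hwb, h⟩ := mul_ne_zero_iff.1 h
    have hb : b ∈ T \ endTree T p := hob b List.mem_cons_self
    rw [ih (fun x hx => hob x (List.mem_cons_of_mem _ hx)) hb h]
    exact endProj_eq_of_step hp hw.1 hw.2
      (hA w hw.1 b hb.1 (ENNReal.ofReal_pos.1 (pos_iff_ne_zero.2 hwb)))

theorem tsum_excursion_le_indicator (hT : IsTree T) (hp : IsEnd T p) (hM : IsTransMatrix T U)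
    (hA : IsAUD T U) {y v : Word} (hy : y ∈ T \ endTree T p) (hv : v ∈ endTree T p) :
    ∑' ob : {ob : List Word | ∀ x ∈ ob, x ∈ T \ endTree T p},
        pathWeight (ofRealKernel U) (y :: (ob ++ [v])) ≤
      {w | endProj T p w = v}.indicator 1 y := by
  have hvT : v ∈ T := endTree_subset hT hp hv
  by_cases hyv : y ∈ {w | endProj T p w = v}
  · rw [Set.indicator_of_mem hyv]
    exact tsum_pathWeight_cons_append_le_one (fun b hb => (tsum_ofRealKernel_eq_one hM hb).le)
      hy.1 ⟨hvT, hv⟩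
  · rw [Set.indicator_of_notMem hyv, nonpos_iff_eq_zero, ENNReal.tsum_eq_zero]
    intro ob
    by_contra h
    exact hyv ((endProj_eq_of_pathWeight_ne_zero hp hA hvT ob.2 hy h).symm.trans
      (endProj_of_mem hv))

theorem add_tsum_indicator_le_ofReal_projMat (hT : IsTree T) (hp : IsEnd T p)
    (hM : IsTransMatrix T U) {a v : Word} (ha : a ∈ T) (hv : v ∈ endTree T p) :
    ofRealKernel U a v +
        ∑' y : ↥(T \ endTree T p), {w | endProj T p w = v}.indicator (ofRealKernel U a) y ≤
      ofRealKernel (projMat T p U) a v := by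
  set F := {w | endProj T p w = v}
  have hdisj : Disjoint {v} ((T \ endTree T p) ∩ F) :=
    Set.disjoint_singleton_left.2 fun h => h.1.2 hv
  have hfiber : {v} ∪ (T \ endTree T p) ∩ F ⊆ {w | w ∈ T ∧ projTo T p w v} := by
    rintro w (rfl | ⟨⟨hwT, -⟩, hw⟩)
    · exact ⟨endTree_subset hT hp hv, Or.inl ⟨hv, rfl⟩⟩
    · exact ⟨hwT, (projTo_iff hp).2 hw.symm⟩
  rw [ofReal_projMat hM ha, tsum_subtype, Set.indicator_indicator, ← tsum_subtype,
    ← tsum_singleton v (ofRealKernel U a),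
    ← ENNReal.summable.tsum_union_disjoint hdisj ENNReal.summable]
  exact ENNReal.tsum_mono_subtype _ hfiber

theorem tsum_excursion_le (hT : IsTree T) (hp : IsEnd T p) (hM : IsTransMatrix T U)
    (hA : IsAUD T U) {a v : Word} (ha : a ∈ T) (hv : v ∈ endTree T p) :
    ∑' ob : {ob : List Word | ∀ x ∈ ob, x ∈ T \ endTree T p},
        pathWeight (ofRealKernel U) (a :: (ob ++ [v])) ≤
      ofRealKernel (projMat T p U) a v := by
  set O := {ob : List Word | ∀ x ∈ ob, x ∈ T \ endTree T p}
  set K := ofRealKernel U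
  set f := fun ob => pathWeight K (a :: (ob ++ [v]))
  have hcover : O ⊆ {[]} ∪ ⋃ y ∈ T \ endTree T p, List.cons y '' O := by
    rintro (_ | ⟨y, ob⟩) hob
    · exact Or.inl rfl
    · exact Or.inr (Set.mem_biUnion (hob y List.mem_cons_self)
        ⟨ob, fun x hx => hob x (List.mem_cons_of_mem _ hx), rfl⟩)
  calc ∑' ob : O, f ob
      ≤ ∑' ob : ↥({[]} ∪ ⋃ y ∈ T \ endTree T p, List.cons y '' O), f ob :=
        ENNReal.tsum_mono_subtype f hcover
    _ ≤ ∑' ob : ({[]} : Set (List Word)), f ob +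
          ∑' y : ↥(T \ endTree T p), ∑' ob : List.cons y.1 '' O, f ob :=
        (ENNReal.tsum_union_le f _ _).trans (add_le_add le_rfl (ENNReal.tsum_biUnion_le_tsum _ _ _))
    _ = K a v + ∑' y : ↥(T \ endTree T p), K a y * ∑' ob : O, pathWeight K (y :: (ob ++ [v])) := by
        simp_rw [tsum_singleton (f := f), tsum_image f List.cons_injective.injOn,
          ← ENNReal.tsum_mul_left]
        simp [f]
    _ ≤ K a v + ∑' y : ↥(T \ endTree T p), {w | endProj T p w = v}.indicator (K a) y := by
        gcongr with y
        refine (mul_le_mul_of_nonneg_left (tsum_excursion_le_indicator hT hp hM hA y.2 hv)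
          zero_le).trans_eq ?_
        simp [Set.indicator_apply]
    _ ≤ ofRealKernel (projMat T p U) a v := add_tsum_indicator_le_ofReal_projMat hT hp hM ha hv

theorem tsum_lifts_le (hT : IsTree T) (hp : IsEnd T p) (hM : IsTransMatrix T U)
    (hA : IsAUD T U) {δ : List Word} (hδ : ∀ x ∈ δ, x ∈ endTree T p) {a : Word} (ha : a ∈ T) :
    ∑' l : lifts T (endTree T p) δ, pathWeight (ofRealKernel U) (a :: l) ≤
      pathWeight (ofRealKernel (projMat T p U)) (a :: δ) := by
  induction δ generalizing a with
  | nil => simp [lifts]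
  | cons v δ ih =>
    have hv : v ∈ endTree T p := hδ v List.mem_cons_self
    calc ∑' l : lifts T (endTree T p) (v :: δ), pathWeight (ofRealKernel U) (a :: l)
        ≤ ∑' (ob : {ob : List Word | ∀ x ∈ ob, x ∈ T \ endTree T p})
            (t : lifts T (endTree T p) δ), pathWeight (ofRealKernel U) (a :: (ob ++ v :: t)) :=
          tsum_image2_le (fun ob t => ob ++ v :: t) _ _
            fun l => pathWeight (ofRealKernel U) (a :: l)
      _ = (∑' ob : {ob : List Word | ∀ x ∈ ob, x ∈ T \ endTree T p},
            pathWeight (ofRealKernel U) (a :: (ob ++ [v]))) *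
          ∑' t : lifts T (endTree T p) δ, pathWeight (ofRealKernel U) (v :: t) := by
          rw [← ENNReal.tsum_mul_right]
          refine tsum_congr fun ob => ?_
          rw [← ENNReal.tsum_mul_left]
          exact tsum_congr fun t => pathWeight_cons_append_cons _ _ _ _
      _ ≤ ofRealKernel (projMat T p U) a v *
          pathWeight (ofRealKernel (projMat T p U)) (v :: δ) := by
          gcongr
          · exact tsum_excursion_le hT hp hM hA ha hv
          · exact ih (fun x hx => hδ x (List.mem_cons_of_mem _ hx)) (endTree_subset hT hp hv)
      _ = pathWeight (ofRealKernel (projMat T p U)) (a :: v :: δ) := rfl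

theorem recurrent_projMat (hT : IsTree T) (hp : IsEnd T p) (hM : IsTransMatrix T U)
    (hA : IsAUD T U) (hrec : Recurrent T U) : Recurrent (endTree T p) (projMat T p U) := by
  have hV := isTransMatrix_projMat hT hp hM
  rw [recurrent_iff hM.1] at hrec
  rw [recurrent_iff hV.1]
  refine le_antisymm ?_ ?_
  · refine (ENNReal.tsum_mono_subtype _ fun δ hδ => ?_).trans
      (tsum_firstPassages_le_one (B := {[]}) (fun a ha => (tsum_ofRealKernel_eq_one hV ha).le)
        hp.nil_mem_endTree)
    obtain ⟨mid, rfl, hmem, hmid⟩ := isLoop_iff.1 hδ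
    exact Set.mem_iUnion.2 ⟨_, cons_append_mem_firstPassages
      (fun x hx => ⟨hmem x (List.mem_cons_of_mem _ (List.mem_append_left _ hx)), hmid x hx⟩)
      ⟨hp.nil_mem_endTree, rfl⟩⟩
  · calc 1 = ∑' γ : {γ // IsLoop T γ}, pathWeight (ofRealKernel U) γ := hrec.symm
      _ ≤ ∑' γ : ⋃ δ : {δ // IsLoop (endTree T p) δ},
            List.cons [] '' lifts T (endTree T p) δ.1.tail, pathWeight (ofRealKernel U) γ :=
          ENNReal.tsum_mono_subtype _ (setOf_isLoop_subset hp.nil_mem_endTree)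
      _ ≤ ∑' δ : {δ // IsLoop (endTree T p) δ}, ∑' γ : List.cons [] '' lifts T (endTree T p)
            δ.1.tail, pathWeight (ofRealKernel U) γ := ENNReal.tsum_iUnion_le_tsum _ _
      _ ≤ ∑' δ : {δ // IsLoop (endTree T p) δ}, pathWeight (ofRealKernel (projMat T p U)) δ := by
          refine ENNReal.tsum_le_tsum fun δ => ?_
          obtain ⟨mid, hδ, hmem, -⟩ := isLoop_iff.1 δ.2
          rw [tsum_image _ List.cons_injective.injOn]
          refine (tsum_lifts_le hT hp hM hA (fun x hx => hmem x (List.mem_of_mem_tail hx))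
            hT.1).trans_eq ?_
          rw [hδ]
          rfl

end Recurrence

theorem end_projection_general (T : Set Word) (hT : IsTree T)
    (U : Word → Word → ℝ) (hM : IsTransMatrix T U) (hA : IsAUD T U)
    (hI : IrreducibleOn T U) :
    (∀ p : ℕ → Word, IsEnd T p →
      IsTransMatrix (endTree T p) (projMat T p U) ∧
      IsAUD (endTree T p) (projMat T p U) ∧
      IrreducibleOn (endTree T p) (projMat T p U)) ∧
    ((∃ p : ℕ → Word, IsEnd T p ∧ ¬ Recurrent (endTree T p) (projMat T p U)) →
      ¬ Recurrent T U) := by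
  refine ⟨fun p hp => ⟨isTransMatrix_projMat hT hp hM, isAUD_projMat hT hp hM hA,
    irreducibleOn_projMat hT hp hM hA hI⟩, ?_⟩
  rintro ⟨p, hp, hnr⟩ hrec
  exact hnr (recurrent_projMat hT hp hM hA hrec)

theorem end_projection (T : Set Word) (hT : IsTree T) (hinf : T.Infinite)
    (U : Word → Word → ℝ) (hM : IsTransMatrix T U) (hA : IsAUD T U)
    (hI : IrreducibleOn T U) :
    (∀ p : ℕ → Word, IsEnd T p →
      IsTransMatrix (endTree T p) (projMat T p U) ∧
      IsAUD (endTree T p) (projMat T p U) ∧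
      IrreducibleOn (endTree T p) (projMat T p U)) ∧
    ((∃ p : ℕ → Word, IsEnd T p ∧ ¬ Recurrent (endTree T p) (projMat T p U)) →
      ¬ Recurrent T U) :=
  end_projection_general T hT U hM hA hI
end

section
/- Let τ be a finite or infinite rooted locally finite tree, ℓ ≠ ∅ a leaf of τ, and τ' = τ \ {ℓ}. Let U be an AUD transition matrix on τ with U(ℓ, p(ℓ)) > 0, and let U' be the AUD transition matrix on τ' defined by U'(u,v) = U(u,v) for all u ∈ τ' and v ∈ τ' with v ≠ p(ℓ), and U'(u, p(ℓ)) = U(u, p(ℓ)) + U(u, ℓ) for all u ∈ τ'. If ρ' : τ' → ℝ satisfies ρ'(u) = ∑_{v∈τ'} ρ'(v) U'(v,u) for every u ∈ τ' (for an AUD matrix these sums have finitely many nonzero terms), then ρ : τ → ℝ defined by ρ(u) = ρ'(u) for u ≠ ℓ and ρ(ℓ) = ( ∑_{v ∈ [[∅,p(ℓ)]]} ρ'(v) U(v,ℓ) ) / U(ℓ, p(ℓ)) satisfies ρ(u) = ∑_{v∈τ} ρ(v) U(v,u) for every u ∈ τ. -/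
open scoped BigOperators ENNReal

/-- Extension of a measure on `τ \ {ℓ}` to the leaf `ℓ`, via the balance equation at `ℓ`. -/
noncomputable def leafExt (ℓ : Word) (U : Word → Word → ℝ) (ρ' : Word → ℝ) : Word → ℝ :=
  fun w =>
    if w = ℓ then
      (∑ k ∈ Finset.range ((par ℓ).length + 1),
        ρ' ((par ℓ).take k) * U ((par ℓ).take k) ℓ) / U ℓ (par ℓ)
    else ρ' w

lemma tsum_set_eq_sum {s : Set Word} [∀ v : Word, Decidable (v ∈ s)] (f : Word → ℝ) (A : Finset Word)
    (h : ∀ v ∈ s, f v ≠ 0 → v ∈ A) :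
    ∑' v : s, f (v : Word) = ∑ v ∈ A, if v ∈ s then f v else 0 := by
  rw [tsum_subtype]
  have h0 : ∀ v ∉ A, s.indicator f v = 0 := by
    intro v hv
    by_cases hvs : v ∈ s
    · rw [Set.indicator_of_mem hvs]
      by_contra hne; exact hv (h v hvs hne)
    · exact Set.indicator_of_notMem hvs _
  rw [tsum_eq_sum h0]
  refine Finset.sum_congr rfl fun v _ => ?_
  by_cases hv : v ∈ s <;> simp [Set.indicator, hv]

def preFinset (w : Word) : Finset Word := (Finset.range (w.length + 1)).image (fun k => w.take k)

lemma mem_preFinset {v w : Word} (h : v <+: w) : v ∈ preFinset w :=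
  Finset.mem_image.2 ⟨v.length, Finset.mem_range.2 (Nat.lt_succ_of_le h.length_le),
    (List.prefix_iff_eq_take.1 h).symm⟩

lemma take_injOn (w : Word) : ∀ k ∈ Finset.range (w.length + 1),
    ∀ k' ∈ Finset.range (w.length + 1), w.take k = w.take k' → k = k' := by
  intro k hk k' hk' h
  have h2 := congrArg List.length h
  simp only [List.length_take] at h2
  simp only [Finset.mem_range] at hk hk'
  omega

theorem leaf_addition (τ : Set Word) (hτ : IsTree τ) (ℓ : Word) (hℓ : ℓ ∈ τ)
    (hℓne : ℓ ≠ []) (hleaf : children τ ℓ = ∅)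
    (U U' : Word → Word → ℝ) (hU : IsTransMatrix τ U) (hA : IsAUD τ U)
    (hpos : 0 < U ℓ (par ℓ))
    (hU'₁ : ∀ u ∈ τ \ {ℓ}, ∀ v ∈ τ \ {ℓ}, v ≠ par ℓ → U' u v = U u v)
    (hU'₂ : ∀ u ∈ τ \ {ℓ}, U' u (par ℓ) = U u (par ℓ) + U u ℓ)
    (ρ' : Word → ℝ)
    (hρ' : ∀ u ∈ τ \ {ℓ}, ρ' u = ∑' v : ↥(τ \ {ℓ}), ρ' (v : Word) * U' (v : Word) u) :
    ∀ u ∈ τ, leafExt ℓ U ρ' u = ∑' v : τ, leafExt ℓ U ρ' (v : Word) * U (v : Word) u := by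
  classical
  obtain ⟨hroot, hpref, hchild⟩ := hτ
  set p : Word := par ℓ with hp
  have hpdl : p = ℓ.dropLast := rfl
  have hpτ : p ∈ τ := hpref ℓ hℓ p (List.dropLast_prefix ℓ)
  have hℓlen : 0 < ℓ.length := List.length_pos_iff.2 hℓne
  have hplen : p.length = ℓ.length - 1 := by rw [hpdl]; simp
  have hpne : p ≠ ℓ := fun h => by rw [h] at hplen; omega
  have hUpos := hU.1
  have hUppos : 0 < U ℓ p := hpos
  -- no transitions out of ℓ except to p and ℓ itself
  have hUℓ : ∀ w ∈ τ, w ≠ p → w ≠ ℓ → U ℓ w = 0 := by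
    intro w hw hwp hwl
    by_contra h
    have hpos' : 0 < U ℓ w := lt_of_le_of_ne (hUpos ℓ hℓ w hw) (Ne.symm h)
    rcases hA ℓ hℓ w hw hpos' with h1 | h2
    · exact hwp h1
    · obtain ⟨hwτ, t, rfl⟩ := h2
      have ht : t ≠ [] := by rintro rfl; simp at hwl
      obtain ⟨a, t', rfl⟩ := List.exists_cons_of_ne_nil ht
      have hmem : ℓ ++ [a] ∈ children τ ℓ :=
        ⟨hpref _ hwτ _ ⟨t', by simp⟩, a, rfl⟩
      rw [hleaf] at hmem; exact hmem
  -- transitions into ℓ come from prefixes of ℓ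
  have hIntoℓ : ∀ v ∈ τ, U v ℓ ≠ 0 → v <+: ℓ := by
    intro v hv h
    have hpos' : 0 < U v ℓ := lt_of_le_of_ne (hUpos v hv ℓ hℓ) (Ne.symm h)
    rcases hA v hv ℓ hℓ hpos' with h1 | h2
    · by_cases hvnil : v = []
      · subst hvnil; exact List.nil_prefix
      · exfalso
        have hmem : v ∈ children τ ℓ :=
          ⟨hv, v.getLast hvnil, by rw [h1]; exact (List.dropLast_append_getLast hvnil).symm⟩
        rw [hleaf] at hmem; exact hmem
    · exact h2.2
  -- transitions into u come from children or prefixes of u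
  have hInto : ∀ u ∈ τ, ∀ v ∈ τ, U v u ≠ 0 → v ∈ children τ u ∨ v <+: u := by
    intro u hu v hv h
    have hpos' : 0 < U v u := lt_of_le_of_ne (hUpos v hv u hu) (Ne.symm h)
    rcases hA v hv u hu hpos' with h1 | h2
    · by_cases hvnil : v = []
      · right
        subst hvnil
        have h2 : u = [] := by rw [h1]; rfl
        rw [h2]
      · left
        exact ⟨hv, v.getLast hvnil, by rw [h1]; exact (List.dropLast_append_getLast hvnil).symm⟩
    · right; exact h2.2
  -- row sum at ℓ
  have hB : U ℓ p + U ℓ ℓ = 1 := by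
    have h1 := (hU.2 ℓ hℓ).tsum_eq
    have h2 : (∑' v : τ, U ℓ (v : Word))
        = ∑ v ∈ ({p, ℓ} : Finset Word), if v ∈ τ then U ℓ v else 0 := by
      refine tsum_set_eq_sum _ _ (fun v hv hne => ?_)
      by_cases h3 : v = p
      · simp [h3]
      · by_cases h4 : v = ℓ
        · simp [h4]
        · exact absurd (hUℓ v hv h3 h4) hne
    rw [h2, Finset.sum_pair hpne] at h1
    simpa [hpτ, hℓ] using h1
  have hUℓℓ : U ℓ ℓ = 1 - U ℓ p := by linarith
  -- finite children
  have hcfin : ∀ w ∈ τ, (children τ w).Finite := by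
    intro w hw
    apply ((hchild w hw).image (fun i => w ++ [i])).subset
    rintro v ⟨hv, i, rfl⟩
    exact ⟨i, hv, rfl⟩
  -- the value at ℓ
  set Sv : ℝ := ∑ k ∈ Finset.range (p.length + 1), ρ' (p.take k) * U (p.take k) ℓ with hSv
  have hρℓ : leafExt ℓ U ρ' ℓ = Sv / U ℓ p := by
    simp [leafExt, ← hp, hSv]
  have hρne : ∀ v : Word, v ≠ ℓ → leafExt ℓ U ρ' v = ρ' v := fun v hv => if_neg hv
  -- strict prefixes of ℓ are prefixes of p
  have hstrict : ∀ v : Word, v <+: ℓ → v ≠ ℓ → v <+: p := by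
    intro v hvℓ hvne
    have h1 : v = ℓ.take v.length := List.prefix_iff_eq_take.1 hvℓ
    have h2 : v.length ≤ ℓ.length := hvℓ.length_le
    have h3 : v.length ≠ ℓ.length := by
      intro h; rw [h, List.take_length] at h1; exact hvne h1
    have h4 : v.length ≤ ℓ.length - 1 := by omega
    have h5 : p.take v.length = ℓ.take v.length := by
      rw [hpdl, List.dropLast_eq_take, List.take_take, Nat.min_eq_left h4]
    rw [h1, ← h5]
    exact List.take_prefix _ _
  -- p.take k = ℓ.take k for k ≤ p.length
  have htake : ∀ k ≤ p.length, ℓ.take k = p.take k := by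
    intro k hk
    rw [hpdl, List.dropLast_eq_take, List.take_take, Nat.min_eq_left (by omega)]
  intro u hu
  by_cases huℓ : u = ℓ
  · -- balance at ℓ
    rw [huℓ]
    rw [huℓ] at hu
    have hsum : (∑' v : τ, leafExt ℓ U ρ' (v : Word) * U (v : Word) ℓ)
        = ∑ v ∈ preFinset ℓ, if v ∈ τ then leafExt ℓ U ρ' v * U v ℓ else 0 := by
      refine tsum_set_eq_sum (s := τ) (fun v => leafExt ℓ U ρ' v * U v ℓ) _ (fun v hv hne => ?_)
      exact mem_preFinset (hIntoℓ v hv (fun h0 => hne (by simp [h0])))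
    rw [hsum, preFinset, Finset.sum_image (take_injOn ℓ)]
    have hdrop : ∀ k ∈ Finset.range (ℓ.length + 1),
        (if ℓ.take k ∈ τ then leafExt ℓ U ρ' (ℓ.take k) * U (ℓ.take k) ℓ else 0)
        = leafExt ℓ U ρ' (ℓ.take k) * U (ℓ.take k) ℓ :=
      fun k _ => if_pos (hpref ℓ hℓ _ (List.take_prefix k ℓ))
    rw [Finset.sum_congr rfl hdrop, Finset.sum_range_succ, List.take_length]
    have hbody : ∑ k ∈ Finset.range ℓ.length, leafExt ℓ U ρ' (ℓ.take k) * U (ℓ.take k) ℓ = Sv := by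
      rw [hSv, show ℓ.length = p.length + 1 from by omega]
      refine Finset.sum_congr rfl (fun k hk => ?_)
      have hk' : k ≤ p.length := by simp only [Finset.mem_range] at hk; omega
      rw [htake k hk', hρne]
      intro h
      have := congrArg List.length h
      simp only [List.length_take] at this
      omega
    rw [hbody, hρℓ, hUℓℓ]
    field_simp
    ring
  · -- balance at u ≠ ℓ
    have hu' : u ∈ τ \ {ℓ} := ⟨hu, huℓ⟩
    set A : Finset Word :=
      ((hcfin u hu).toFinset ∪ preFinset u ∪ preFinset ℓ) ∪ {ℓ} with hA
    have hℓA : ℓ ∈ A := by simp [hA]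
    have hmemA : ∀ v, v ∈ children τ u ∨ v <+: u ∨ v <+: ℓ → v ∈ A := by
      intro v hv
      simp only [hA, Finset.mem_union, Set.Finite.mem_toFinset, Finset.mem_singleton]
      rcases hv with h | h | h
      · exact Or.inl (Or.inl (Or.inl h))
      · exact Or.inl (Or.inl (Or.inr (mem_preFinset h)))
      · exact Or.inl (Or.inr (mem_preFinset h))
    have hL : ρ' u = ∑ v ∈ A, if v ∈ τ \ {ℓ} then ρ' v * U' v u else 0 := by
      rw [hρ' u hu']
      refine tsum_set_eq_sum (s := τ \ {ℓ}) (fun v => ρ' v * U' v u) A (fun v hv hne => ?_)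
      have hUne : U' v u ≠ 0 := fun h0 => hne (by simp [h0])
      by_cases hup : u = p
      · rw [hup, hU'₂ v hv] at hUne
        by_cases h1 : U v p = 0
        · have h2 : U v ℓ ≠ 0 := fun h2 => hUne (by rw [h1, h2, add_zero])
          exact hmemA v (Or.inr (Or.inr (hIntoℓ v hv.1 h2)))
        · rcases hInto p hpτ v hv.1 h1 with h | h
          · rw [← hup] at h; exact hmemA v (Or.inl h)
          · rw [← hup] at h; exact hmemA v (Or.inr (Or.inl h))
      · rw [hU'₁ v hv u hu' hup] at hUne
        rcases hInto u hu v hv.1 hUne with h | h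
        · exact hmemA v (Or.inl h)
        · exact hmemA v (Or.inr (Or.inl h))
    have hR : (∑' v : τ, leafExt ℓ U ρ' (v : Word) * U (v : Word) u)
        = ∑ v ∈ A, if v ∈ τ then leafExt ℓ U ρ' v * U v u else 0 := by
      refine tsum_set_eq_sum (s := τ) (fun v => leafExt ℓ U ρ' v * U v u) A (fun v hv hne => ?_)
      have hUne : U v u ≠ 0 := fun h0 => hne (by simp [h0])
      rcases hInto u hu v hv hUne with h | h
      · exact hmemA v (Or.inl h)
      · exact hmemA v (Or.inr (Or.inl h))
    rw [hR, ← Finset.add_sum_erase _ _ hℓA]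
    rw [hρne u huℓ, hL, ← Finset.add_sum_erase _ _ hℓA]
    have hℓnot : ℓ ∉ τ \ {ℓ} := fun h => h.2 rfl
    rw [if_neg hℓnot, if_pos hℓ, zero_add]
    by_cases hup : u = p
    · -- u = par ℓ
      have hsplit : ∀ v ∈ A.erase ℓ,
          (if v ∈ τ \ {ℓ} then ρ' v * U' v u else 0)
          = (if v ∈ τ then leafExt ℓ U ρ' v * U v u else 0)
            + (if v ∈ τ then ρ' v * U v ℓ else 0) := by
        intro v hv
        have hvne : v ≠ ℓ := Finset.ne_of_mem_erase hv
        by_cases hvτ : v ∈ τ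
        · have hv' : v ∈ τ \ {ℓ} := ⟨hvτ, hvne⟩
          rw [if_pos hv', if_pos hvτ, if_pos hvτ, hρne v hvne, hup, hU'₂ v hv']
          ring
        · rw [if_neg (fun h : v ∈ τ \ {ℓ} => hvτ h.1), if_neg hvτ, if_neg hvτ, add_zero]
      rw [Finset.sum_congr rfl hsplit, Finset.sum_add_distrib]
      have hlast : ∑ v ∈ A.erase ℓ, (if v ∈ τ then ρ' v * U v ℓ else 0) = Sv := by
        have hsub : preFinset p ⊆ A.erase ℓ := by
          intro v hv
          obtain ⟨k, hk, rfl⟩ := Finset.mem_image.1 hv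
          simp only [Finset.mem_range] at hk
          have h1 : p.take k <+: p := List.take_prefix _ _
          have h2 : p.take k <+: ℓ := h1.trans (hpdl ▸ List.dropLast_prefix ℓ)
          refine Finset.mem_erase.2 ⟨?_, hmemA _ (Or.inr (Or.inr h2))⟩
          intro h
          have := congrArg List.length h
          simp only [List.length_take] at this
          omega
        rw [← Finset.sum_subset hsub]
        · rw [preFinset, Finset.sum_image (take_injOn p), hSv]
          refine Finset.sum_congr rfl (fun k hk => ?_)
          exact if_pos (hpref p hpτ _ (List.take_prefix k p))
        · intro v hv hvnot
          by_cases hvτ : v ∈ τ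
          · rw [if_pos hvτ]
            by_cases h0 : U v ℓ = 0
            · rw [h0, mul_zero]
            · exfalso
              have hvℓ : v <+: ℓ := hIntoℓ v hvτ h0
              have hvne : v ≠ ℓ := Finset.ne_of_mem_erase hv
              exact hvnot (mem_preFinset (hstrict v hvℓ hvne))
          · rw [if_neg hvτ]
      rw [hlast, hρℓ, hup, div_mul_cancel₀ _ (ne_of_gt hUppos)]
      ring
    · -- u ≠ par ℓ
      have hsame : ∀ v ∈ A.erase ℓ,
          (if v ∈ τ \ {ℓ} then ρ' v * U' v u else 0)
          = (if v ∈ τ then leafExt ℓ U ρ' v * U v u else 0) := by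
        intro v hv
        have hvne : v ≠ ℓ := Finset.ne_of_mem_erase hv
        by_cases hvτ : v ∈ τ
        · have hv' : v ∈ τ \ {ℓ} := ⟨hvτ, hvne⟩
          rw [if_pos hv', if_pos hvτ, hU'₁ v hv' u hu' hup, hρne v hvne]
        · rw [if_neg (fun h : v ∈ τ \ {ℓ} => hvτ h.1), if_neg hvτ]
      rw [Finset.sum_congr rfl hsame, hUℓ u hu hup huℓ, mul_zero, zero_add]
end
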